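/- arXiv:1406.5088 — 6 statements merged into one kernel-verified Lean document; each statement's English description precedes it below -/
import Mathlib

section
/- Let τ be a non-terminating renewal process on ℕ₀ with P(τ₁ = n) = L(n) n^{-(1+α)}, α ∈ (0,1), L slowly varying, such that 2τ₁ is distributed as the first return time to zero of a nearest-neighbor Markov chain on ℕ₀ with ±1 increments. If X and Y are two copies of this chain started at the origin at times −2ℓ and 0 respectively and coupled to coalesce upon meeting, then 0 ≤ u(n) − u(n+ℓ) ≤ u(n) P(τ₁ > n) ∑_{k=0}^{ℓ−1} u(k), where u(m) := P(m ∈ τ). -/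
open Filter

/-- A sequence `L : ℕ → (0,∞)` is slowly varying if `L(⌊λ n⌋)/L(n) → 1` as `n → ∞`
for every `λ > 0`. -/
def SlowlyVarying (L : ℕ → ℝ) : Prop :=
  (∀ n, 0 < L n) ∧
    ∀ lam : ℝ, 0 < lam →
      Tendsto (fun n : ℕ => L ⌊lam * n⌋₊ / L n) atTop (nhds 1)

/-- One-step transition weight of a nearest-neighbor Markov chain on `ℕ₀` with up-probability
`p i` at state `i` (and down-probability `1 - p i`). -/
def stepWeight (p : ℕ → ℝ) (a b : ℕ) : ℝ :=
  if b = a + 1 then p a else if a = b + 1 then 1 - p a else 0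

/-- Probability weight of a path `γ` of length `m` of the nearest-neighbor chain. -/
noncomputable def pathWeight (p : ℕ → ℝ) (m : ℕ) (γ : Fin (m + 1) → ℕ) : ℝ :=
  ∏ i : Fin m, stepWeight p (γ i.castSucc) (γ i.succ)

open scoped Classical in
/-- Probability that the nearest-neighbor chain started at `0` returns to `0` for the first
time at time `m`. -/
noncomputable def firstReturnProb (p : ℕ → ℝ) (m : ℕ) : ℝ :=
  ∑ γ : Fin (m + 1) → Fin (m + 2),
    if (γ 0 : ℕ) = 0 ∧ (γ (Fin.last m) : ℕ) = 0 ∧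
        (∀ i : Fin (m + 1), i ≠ 0 → i ≠ Fin.last m → (γ i : ℕ) ≠ 0)
      then pathWeight p m (fun i => (γ i : ℕ)) else 0

/-!
The renewal sequence is the return probability of the chain, `u n = P^{2n}(0, 0)`: decomposing a
path at its last visit to `0` before time `2n` gives the renewal equation. By reversibility,
`P^{2n}(0, 0) = ∑ₓ P^n(0, x) P^n(x, 0)` is a squared norm in `L²(π)`, which one more step of the
self-adjoint Markov operator `P` cannot increase; so `u` is non-increasing.

Classifying the renewal paths by their last renewal `k < ℓ` and the next one gives
`u (n + ℓ) ≥ u n · P(τ meets [ℓ, ℓ + n])` by monotonicity, and the complementary probability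
`∑_{k<ℓ} u k P(τ₁ > ℓ + n - k)` is at most `P(τ₁ > n) ∑_{k<ℓ} u k`.
-/

open Finset

section BirthDeathChain

variable (p : ℕ → ℝ)

/- With `P` the transition matrix `stepWeight p`: `forwardStep p w = w P`, `backwardStep p g = P g`,
`transFromZero p m x = P^m(0, x)`, `transToZero p m x = P^m(x, 0)`, and `tabooFromZero p m x` is the
probability of going from `0` to `x` in `m` steps without visiting `0` at times `1, …, m`. -/

def forwardStep (w : ℕ → ℝ) : ℕ → ℝ
  | 0 => w 1 * (1 - p 1)
  | x + 1 => w x * p x + w (x + 2) * (1 - p (x + 2))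

def backwardStep (g : ℕ → ℝ) : ℕ → ℝ
  | 0 => p 0 * g 1
  | x + 1 => (1 - p (x + 1)) * g x + p (x + 1) * g (x + 2)

noncomputable def transFromZero : ℕ → ℕ → ℝ
  | 0 => Pi.single 0 1
  | m + 1 => forwardStep p (transFromZero m)

noncomputable def transToZero : ℕ → ℕ → ℝ
  | 0 => Pi.single 0 1
  | m + 1 => backwardStep p (transToZero m)

noncomputable def tabooFromZero : ℕ → ℕ → ℝ
  | 0 => Pi.single 0 1
  | m + 1 => fun x => if x = 0 then 0 else forwardStep p (tabooFromZero m) x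

variable {p}

theorem forwardStep_nonneg (hp : ∀ i, 0 ≤ p i ∧ p i ≤ 1) {w : ℕ → ℝ} (hw : 0 ≤ w) :
    0 ≤ forwardStep p w := by
  intro x
  cases x with
  | zero => exact mul_nonneg (hw 1) (by linarith [hp 1])
  | succ x =>
    exact add_nonneg (mul_nonneg (hw x) (hp x).1) (mul_nonneg (hw _) (by linarith [hp (x + 2)]))

theorem backwardStep_nonneg (hp : ∀ i, 0 ≤ p i ∧ p i ≤ 1) {g : ℕ → ℝ} (hg : 0 ≤ g) :
    0 ≤ backwardStep p g := by
  intro x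
  cases x with
  | zero => exact mul_nonneg (hp 0).1 (hg 1)
  | succ x =>
    exact add_nonneg (mul_nonneg (by linarith [hp (x + 1)]) (hg x)) (mul_nonneg (hp _).1 (hg _))

theorem transFromZero_nonneg (hp : ∀ i, 0 ≤ p i ∧ p i ≤ 1) (m : ℕ) : 0 ≤ transFromZero p m := by
  induction m with
  | zero => exact Pi.single_nonneg.2 zero_le_one
  | succ m ih => exact forwardStep_nonneg hp ih

theorem transToZero_nonneg (hp : ∀ i, 0 ≤ p i ∧ p i ≤ 1) (m : ℕ) : 0 ≤ transToZero p m := by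
  induction m with
  | zero => exact Pi.single_nonneg.2 zero_le_one
  | succ m ih => exact backwardStep_nonneg hp ih

theorem forwardStep_eq_zero_of_lt {w : ℕ → ℝ} {m : ℕ} (hw : ∀ x, m < x → w x = 0) {x : ℕ}
    (hx : m + 1 < x) : forwardStep p w x = 0 := by
  obtain ⟨y, rfl⟩ : ∃ y, x = y + 1 := ⟨x - 1, by omega⟩
  simp [forwardStep, hw y (by omega), hw (y + 2) (by omega)]

theorem transFromZero_eq_zero_of_lt {m x : ℕ} (h : m < x) : transFromZero p m x = 0 := by
  induction m generalizing x with
  | zero => simp [transFromZero, h.ne']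
  | succ m ih => exact forwardStep_eq_zero_of_lt (fun y hy => ih hy) h

theorem tabooFromZero_eq_zero_of_lt {m x : ℕ} (h : m < x) : tabooFromZero p m x = 0 := by
  induction m generalizing x with
  | zero => simp [tabooFromZero, h.ne']
  | succ m ih =>
    simp only [tabooFromZero, forwardStep_eq_zero_of_lt (fun y hy => ih hy) h, ite_self]

theorem transFromZero_eq_zero_of_odd {m x : ℕ} (h : Odd (m + x)) : transFromZero p m x = 0 := by
  induction m generalizing x with
  | zero =>
    obtain ⟨y, rfl⟩ : ∃ y, x = y + 1 := ⟨x - 1, by grind⟩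
    simp [transFromZero]
  | succ m ih =>
    cases x with
    | zero => simp [transFromZero, forwardStep, ih (x := 1) (by simpa using h)]
    | succ y =>
      simp [transFromZero, forwardStep, ih (x := y) (by grind), ih (x := y + 2) (by grind)]

theorem sum_forwardStep_mul {w : ℕ → ℝ} {N : ℕ} (hw : ∀ x, N ≤ x → w x = 0) (g : ℕ → ℝ) :
    ∑ x ∈ range (N + 1), forwardStep p w x * g x =
      ∑ x ∈ range (N + 1), w x * backwardStep p g x := by
  rw [sum_range_succ', sum_range_succ']
  simp only [forwardStep, backwardStep, add_mul, mul_add, sum_add_distrib]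
  have hup : ∑ x ∈ range (N + 1), w x * (p x * g (x + 1)) =
      ∑ x ∈ range N, w (x + 1) * (p (x + 1) * g (x + 2)) + w 0 * (p 0 * g 1) := by
    rw [sum_range_succ']
  have hdown : ∑ x ∈ range (N + 1), w (x + 1) * ((1 - p (x + 1)) * g x) =
      ∑ x ∈ range N, w (x + 2) * (1 - p (x + 2)) * g (x + 1) + w 1 * (1 - p 1) * g 0 := by
    rw [sum_range_succ']
    simp only [mul_assoc]
  rw [sum_range_succ, hw N le_rfl] at hup
  rw [sum_range_succ, hw (N + 1) (by omega)] at hdown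
  simp only [mul_assoc] at hup hdown ⊢
  linarith

theorem transFromZero_add_eq_sum {m k N : ℕ} (h : m + k ≤ N) :
    transFromZero p (m + k) 0 = ∑ x ∈ range (N + 1), transFromZero p m x * transToZero p k x := by
  induction k generalizing m with
  | zero =>
    rw [sum_eq_single 0 (fun x _ hx => by simp [transToZero, hx]) (by simp)]
    simp [transToZero]
  | succ k ih =>
    rw [← add_assoc, add_right_comm, ih (by omega), transToZero,
      ← sum_forwardStep_mul (fun x hx => transFromZero_eq_zero_of_lt (by omega))]
    rfl

/-- `upProd p x / downProd p x` is the reversible measure of the chain. -/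
def upProd (p : ℕ → ℝ) (x : ℕ) : ℝ := ∏ i ∈ range x, p i

def downProd (p : ℕ → ℝ) (x : ℕ) : ℝ := ∏ i ∈ range x, (1 - p (i + 1))

theorem transToZero_mul_upProd (m x : ℕ) :
    transToZero p m x * upProd p x = transFromZero p m x * downProd p x := by
  induction m generalizing x with
  | zero => cases x <;> simp [transToZero, transFromZero, upProd, downProd]
  | succ m ih =>
    cases x with
    | zero =>
      have h1 := ih 1
      simp only [upProd, downProd, prod_range_one, prod_range_zero, zero_add] at h1 ⊢
      simp only [transToZero, transFromZero, backwardStep, forwardStep]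
      linear_combination h1
    | succ y =>
      have h0 := ih y
      have h2 := ih (y + 2)
      simp only [upProd, downProd, prod_range_succ] at h0 h2 ⊢
      simp only [transToZero, transFromZero, backwardStep, forwardStep]
      linear_combination ((1 - p (y + 1)) * p y) * h0 + h2

theorem transFromZero_eq_zero_of_upProd_eq_zero {m x : ℕ} (h : upProd p x = 0) :
    transFromZero p m x = 0 := by
  induction m generalizing x with
  | zero =>
    cases x with
    | zero => simp [upProd] at h
    | succ y => simp [transFromZero]
  | succ m ih =>
    cases x with
    | zero => simp [upProd] at h
    | succ y =>
      have h2 : upProd p (y + 2) = 0 := by rw [upProd, prod_range_succ, ← upProd, h, zero_mul]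
      rw [upProd, prod_range_succ, ← upProd, mul_eq_zero] at h
      simp only [transFromZero, forwardStep, ih h2]
      rcases h with h | h
      · rw [ih h]; ring
      · rw [h]; ring

/-- Detailed balance between `y` and `y + 2`, multiplied through by the reversible measure so that
it also holds where that measure vanishes. -/
theorem transFromZero_mul_transToZero_add_two (m y : ℕ) :
    transFromZero p m y * transToZero p m (y + 2) * (p y * p (y + 1)) =
      transFromZero p m (y + 2) * transToZero p m y * ((1 - p (y + 1)) * (1 - p (y + 2))) := by
  have hup : upProd p (y + 2) = upProd p y * (p y * p (y + 1)) := by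
    simp only [upProd, prod_range_succ, mul_assoc]
  have hdown : downProd p (y + 2) = downProd p y * ((1 - p (y + 1)) * (1 - p (y + 2))) := by
    simp only [downProd, prod_range_succ, mul_assoc]
  by_cases hzero : upProd p (y + 2) = 0
  · rw [transFromZero_eq_zero_of_upProd_eq_zero hzero]
    rcases mul_eq_zero.1 (hup ▸ hzero) with h | h
    · rw [transFromZero_eq_zero_of_upProd_eq_zero h]; ring
    · rw [h]; ring
  · have hy : upProd p y ≠ 0 := fun h => hzero (by rw [hup, h, zero_mul])
    apply mul_right_cancel₀ (mul_ne_zero hy hzero)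
    have r0 := transToZero_mul_upProd (p := p) m y
    have r2 := transToZero_mul_upProd (p := p) m (y + 2)
    rw [hup, hdown] at r2
    rw [hup]
    linear_combination (transFromZero p m y * upProd p y * (p y * p (y + 1))) * r2 -
      (transFromZero p m (y + 2) * ((1 - p (y + 1)) * (1 - p (y + 2))) * upProd p y *
        (p y * p (y + 1))) * r0

theorem backwardStep_const_one (hp0 : p 0 = 1) : backwardStep p (fun _ => 1) = fun _ => 1 := by
  funext x
  cases x <;> simp [backwardStep, hp0]

theorem transFromZero_mul_transToZero_succ_le (hp0 : p 0 = 1) (hp : ∀ i, 0 ≤ p i ∧ p i ≤ 1)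
    (m x : ℕ) :
    transFromZero p (m + 1) x * transToZero p (m + 1) x ≤
      forwardStep p (fun y => transFromZero p m y * transToZero p m y) x := by
  cases x with
  | zero => simp only [transFromZero, transToZero, forwardStep, backwardStep, hp0]; linarith
  | succ y =>
    have hcross := transFromZero_mul_transToZero_add_two (p := p) m y
    have ha := transFromZero_nonneg hp m
    have hb := transToZero_nonneg hp m
    simp only [transFromZero, transToZero, forwardStep, backwardStep]
    set A := transFromZero p m
    set B := transToZero p m
    have hup : 0 ≤ p y * p (y + 1) := mul_nonneg (hp y).1 (hp (y + 1)).1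
    have hdown : 0 ≤ (1 - p (y + 1)) * (1 - p (y + 2)) :=
      mul_nonneg (by linarith [hp (y + 1)]) (by linarith [hp (y + 2)])
    -- AM-GM: by `hcross` the mixed term is the geometric mean of the two diagonal ones
    have hamgm : 2 * (A y * B (y + 2) * (p y * p (y + 1))) ≤
        A y * B y * (p y * p (y + 1)) +
          A (y + 2) * B (y + 2) * ((1 - p (y + 1)) * (1 - p (y + 2))) :=
      two_mul_le_add_of_sq_le_mul (mul_nonneg (mul_nonneg (ha y) (hb y)) hup)
        (mul_nonneg (mul_nonneg (ha (y + 2)) (hb (y + 2))) hdown)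
        (by linear_combination (A y * B (y + 2) * (p y * p (y + 1))) * hcross)
    linear_combination hamgm - hcross

theorem transFromZero_two_mul_antitone (hp0 : p 0 = 1) (hp : ∀ i, 0 ≤ p i ∧ p i ≤ 1) :
    Antitone fun n => transFromZero p (2 * n) 0 := by
  refine antitone_nat_of_succ_le fun n => ?_
  set w := fun y => transFromZero p n y * transToZero p n y
  have hw : ∀ x, 2 * n + 2 ≤ x → w x = 0 := fun x hx => by
    simp [w, transFromZero_eq_zero_of_lt (show n < x by omega)]
  calc transFromZero p (2 * (n + 1)) 0
      = transFromZero p ((n + 1) + (n + 1)) 0 := by rw [two_mul]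
    _ = ∑ x ∈ range (2 * n + 3), transFromZero p (n + 1) x * transToZero p (n + 1) x :=
        transFromZero_add_eq_sum (by omega)
    _ ≤ ∑ x ∈ range (2 * n + 3), forwardStep p w x * 1 := by
        simp only [mul_one]
        exact sum_le_sum fun x _ => transFromZero_mul_transToZero_succ_le hp0 hp n x
    _ = ∑ x ∈ range (2 * n + 3), w x := by
        rw [sum_forwardStep_mul hw, backwardStep_const_one hp0]; simp
    _ = transFromZero p (n + n) 0 := (transFromZero_add_eq_sum (by omega)).symm
    _ = transFromZero p (2 * n) 0 := by rw [two_mul]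

theorem transFromZero_eq_sum_tabooFromZero (m x : ℕ) :
    transFromZero p m x = ∑ k ∈ range (m + 1), transFromZero p k 0 * tabooFromZero p (m - k) x := by
  induction m generalizing x with
  | zero => simp [tabooFromZero, transFromZero]
  | succ m ih =>
    rw [sum_range_succ, Nat.sub_self]
    cases x with
    | zero =>
      rw [sum_eq_zero fun k hk => by
        simp [tabooFromZero, Nat.sub_add_comm (mem_range_succ_iff.1 hk)]]
      simp [tabooFromZero]
    | succ y =>
      have hstep : ∀ k ∈ range (m + 1), transFromZero p k 0 * tabooFromZero p (m + 1 - k) (y + 1) =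
          transFromZero p k 0 * tabooFromZero p (m - k) y * p y +
            transFromZero p k 0 * tabooFromZero p (m - k) (y + 2) * (1 - p (y + 2)) := by
        intro k hk
        rw [Nat.sub_add_comm (mem_range_succ_iff.1 hk)]
        simp only [tabooFromZero, forwardStep, Nat.add_one_ne_zero, if_false]
        ring
      rw [sum_congr rfl hstep, sum_add_distrib, ← sum_mul, ← sum_mul, ← ih, ← ih]
      simp [transFromZero, forwardStep, tabooFromZero]

theorem stepWeight_nonneg (hp : ∀ i, 0 ≤ p i ∧ p i ≤ 1) (a b : ℕ) : 0 ≤ stepWeight p a b := by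
  unfold stepWeight
  split_ifs
  · exact (hp a).1
  · linarith [hp a]
  · rfl

theorem firstReturnProb_nonneg (hp : ∀ i, 0 ≤ p i ∧ p i ≤ 1) (m : ℕ) : 0 ≤ firstReturnProb p m :=
  sum_nonneg fun _ _ => by
    split_ifs
    · exact prod_nonneg fun _ _ => stepWeight_nonneg hp _ _
    · rfl

theorem sum_mul_stepWeight {w : ℕ → ℝ} {N : ℕ} (hw : ∀ x, N ≤ x → w x = 0) {x : ℕ} (hx : x < N) :
    ∑ j ∈ range N, w j * stepWeight p j x = forwardStep p w x := by
  have hterm : ∀ j, w j * stepWeight p j x =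
      (if j + 1 = x then w j * p j else 0) + (if j = x + 1 then w j * (1 - p j) else 0) := by
    intro j
    unfold stepWeight
    split_ifs <;> first | (exfalso; omega) | ring
  simp only [hterm, sum_add_distrib, sum_ite_eq', mem_range]
  have htail : (if x + 1 < N then w (x + 1) * (1 - p (x + 1)) else 0) =
      w (x + 1) * (1 - p (x + 1)) := by
    split_ifs with h
    · rfl
    · rw [hw _ (not_lt.1 h), zero_mul]
  cases x with
  | zero => simp [htail, forwardStep]
  | succ y => simp [htail, forwardStep, show y < N by omega]

theorem pathWeight_snoc (m : ℕ) (γ : Fin (m + 1) → ℕ) (c : ℕ) :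
    pathWeight p (m + 1) (Fin.snoc γ c) = pathWeight p m γ * stepWeight p (γ (Fin.last m)) c := by
  simp only [pathWeight, Fin.prod_univ_castSucc, Fin.succ_castSucc, Fin.snoc_castSucc,
    Fin.succ_last, Fin.snoc_last]

open scoped Classical in
noncomputable def tabooPathSum (p : ℕ → ℝ) (N m : ℕ) (x : Fin N) : ℝ :=
  ∑ γ : Fin (m + 1) → Fin N,
    if ((γ 0 : ℕ) = 0 ∧ ∀ i, i ≠ 0 → (γ i : ℕ) ≠ 0) ∧ γ (Fin.last m) = x
      then pathWeight p m (fun i => γ i) else 0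

open scoped Classical in
theorem sum_snoc_tabooPaths (N m : ℕ) (Q : Fin N → Prop) :
    ∑ γ : Fin (m + 2) → Fin N,
      (if ((γ 0 : ℕ) = 0 ∧ ∀ i : Fin (m + 1), i ≠ 0 → (γ i.castSucc : ℕ) ≠ 0) ∧ Q (γ (Fin.last _))
        then pathWeight p (m + 1) (fun i => γ i) else 0) =
      ∑ b, if Q b then ∑ j, tabooPathSum p N m j * stepWeight p j b else 0 := by
  rw [← (Fin.snocEquiv fun _ => Fin N).sum_comp, Fintype.sum_prod_type]
  refine sum_congr rfl fun b _ => ?_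
  have hzero : ∀ γ : Fin (m + 1) → Fin N, (Fin.snoc γ b : Fin (m + 2) → Fin N) 0 = γ 0 :=
    fun γ => Fin.snoc_castSucc (i := 0) ..
  have hval : ∀ γ : Fin (m + 1) → Fin N, (fun i => ((Fin.snoc γ b : Fin (m + 2) → Fin N) i : ℕ)) =
      Fin.snoc (fun i => (γ i : ℕ)) (b : ℕ) := fun γ => Fin.comp_snoc Fin.val γ b
  simp only [Fin.snocEquiv_apply, Fin.snoc_castSucc, Fin.snoc_last, hzero, hval, pathWeight_snoc,
    ite_and]
  split_ifs with hQ
  · simp only [tabooPathSum, sum_mul, ite_mul, zero_mul, ite_and]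
    rw [sum_comm]
    refine sum_congr rfl fun γ _ => ?_
    split_ifs <;> simp
  · simp

theorem tabooPathSum_zero (N : ℕ) (x : Fin N) :
    tabooPathSum p N 0 x = (Pi.single 0 1 : ℕ → ℝ) x := by
  rw [tabooPathSum, ← (Equiv.funUnique (Fin 1) (Fin N)).symm.sum_comp]
  simp [pathWeight, Pi.single_apply, and_comm, ite_and]

theorem tabooPathSum_succ (N m : ℕ) (x : Fin N) :
    tabooPathSum p N (m + 1) x =
      if (x : ℕ) = 0 then 0 else ∑ j, tabooPathSum p N m j * stepWeight p j x := by
  have hcond : ∀ γ : Fin (m + 2) → Fin N,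
      (((γ 0 : ℕ) = 0 ∧ ∀ i, i ≠ 0 → (γ i : ℕ) ≠ 0) ∧ γ (Fin.last _) = x) ↔
        (((γ 0 : ℕ) = 0 ∧ ∀ i : Fin (m + 1), i ≠ 0 → (γ i.castSucc : ℕ) ≠ 0) ∧
          (γ (Fin.last _) = x ∧ (x : ℕ) ≠ 0)) := by
    intro γ
    rw [Fin.forall_fin_succ']
    simp only [Fin.castSucc_ne_zero_iff, ne_eq, Fin.last_eq_zero_iff]
    aesop
  rw [tabooPathSum]
  convert sum_snoc_tabooPaths (p := p) N m (fun b => b = x ∧ (x : ℕ) ≠ 0) using 1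
  · exact sum_congr rfl fun γ _ => by simp only [hcond]; congr
  · split_ifs with hx <;> simp [hx]

theorem firstReturnProb_succ_eq_sum (m : ℕ) :
    firstReturnProb p (m + 1) = ∑ j, tabooPathSum p (m + 3) m j * stepWeight p j 0 := by
  have hcond : ∀ γ : Fin (m + 2) → Fin (m + 3),
      ((γ 0 : ℕ) = 0 ∧ (γ (Fin.last _) : ℕ) = 0 ∧
          ∀ i, i ≠ 0 → i ≠ Fin.last _ → (γ i : ℕ) ≠ 0) ↔
        (((γ 0 : ℕ) = 0 ∧ ∀ i : Fin (m + 1), i ≠ 0 → (γ i.castSucc : ℕ) ≠ 0) ∧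
          (γ (Fin.last _) : ℕ) = 0) := by
    intro γ
    rw [Fin.forall_fin_succ']
    simp only [Fin.castSucc_ne_zero_iff, ne_eq, Fin.castSucc_ne_last]
    aesop
  rw [firstReturnProb]
  convert sum_snoc_tabooPaths (p := p) (m + 3) m (fun b => (b : ℕ) = 0) using 1
  · exact sum_congr rfl fun γ _ => by simp only [hcond]; congr
  · rw [eq_comm, sum_eq_single (0 : Fin (m + 3))]
    · simp
    · exact fun b _ hb => if_neg (Fin.val_ne_of_ne hb)
    · simp

theorem tabooPathSum_eq {N m : ℕ} (hm : m < N) (x : Fin N) :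
    tabooPathSum p N m x = tabooFromZero p m x := by
  induction m generalizing x with
  | zero => rw [tabooPathSum_zero]; rfl
  | succ m ih =>
    simp only [tabooPathSum_succ, tabooFromZero, ih (by omega : m < N)]
    rw [Fin.sum_univ_eq_sum_range (fun j => tabooFromZero p m j * stepWeight p j x),
      sum_mul_stepWeight (fun j hj => tabooFromZero_eq_zero_of_lt (by omega)) x.isLt]

theorem firstReturnProb_succ (m : ℕ) :
    firstReturnProb p (m + 1) = tabooFromZero p m 1 * (1 - p 1) := by
  simp only [firstReturnProb_succ_eq_sum, tabooPathSum_eq (show m < m + 3 by omega)]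
  rw [Fin.sum_univ_eq_sum_range (fun j => tabooFromZero p m j * stepWeight p j 0),
    sum_mul_stepWeight (fun j hj => tabooFromZero_eq_zero_of_lt (by omega)) (by omega)]
  rfl

theorem transFromZero_succ_zero (M : ℕ) :
    transFromZero p (M + 1) 0 =
      ∑ k ∈ range (M + 1), transFromZero p k 0 * firstReturnProb p (M + 1 - k) := by
  rw [transFromZero, forwardStep, transFromZero_eq_sum_tabooFromZero, sum_mul]
  refine sum_congr rfl fun k hk => ?_
  rw [Nat.sub_add_comm (mem_range_succ_iff.1 hk), firstReturnProb_succ, mul_assoc]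

end BirthDeathChain

theorem sum_range_two_mul_of_odd_eq_zero {M : Type*} [AddCommMonoid M] {f : ℕ → M}
    (hf : ∀ m, f (2 * m + 1) = 0) (N : ℕ) :
    ∑ k ∈ range (2 * N), f k = ∑ m ∈ range N, f (2 * m) := by
  induction N with
  | zero => simp
  | succ N ih =>
    rw [mul_add, mul_one, sum_range_succ, sum_range_succ, ih, sum_range_succ, hf, add_zero]

structure IsRenewalSeq (K u : ℕ → ℝ) : Prop where
  zero : u 0 = 1
  succ : ∀ n, u (n + 1) = ∑ m ∈ range (n + 1), K (n + 1 - m) * u m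

theorem isRenewalSeq_transFromZero {K p : ℕ → ℝ}
    (hfirst : ∀ n : ℕ, 1 ≤ n → K n = firstReturnProb p (2 * n)) :
    IsRenewalSeq K fun n => transFromZero p (2 * n) 0 where
  zero := by simp [transFromZero]
  succ n := by
    rw [show 2 * (n + 1) = 2 * n + 1 + 1 by ring, transFromZero_succ_zero,
      show 2 * n + 1 + 1 = 2 * (n + 1) by ring, sum_range_two_mul_of_odd_eq_zero]
    · refine sum_congr rfl fun m hm => ?_
      have hm := mem_range_succ_iff.1 hm
      rw [hfirst _ (by omega), mul_comm, show 2 * (n + 1) - 2 * m = 2 * (n + 1 - m) by omega]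
    · intro m
      rw [transFromZero_eq_zero_of_odd (by simp [parity_simps]), zero_mul]

/-- `P(τ₁ > m)`, for `K` the law of `τ₁`. -/
def survival (K : ℕ → ℝ) (m : ℕ) : ℝ := 1 - ∑ k ∈ range (m + 1), K k

section Survival

variable {K : ℕ → ℝ}

theorem hasSum_survival (hK : HasSum K 1) (m : ℕ) :
    HasSum (fun k => if m < k then K k else 0) (survival K m) := by
  have hhead := hasSum_sum_of_ne_finset_zero (L := .unconditional ℕ)
    (f := fun k => if k < m + 1 then K k else 0) (s := range (m + 1))
    fun k hk => if_neg (by simpa using hk)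
  rw [sum_congr rfl fun k hk => if_pos (mem_range.1 hk)] at hhead
  have htail :
      (fun k => if m < k then K k else 0) = fun k => K k - if k < m + 1 then K k else 0 := by
    funext k
    split_ifs <;> first | (exfalso; omega) | ring
  rw [htail]
  exact hK.sub hhead

theorem survival_succ (m : ℕ) : survival K (m + 1) = survival K m - K (m + 1) := by
  rw [survival, survival, sum_range_succ]; ring

theorem survival_antitone (hK : ∀ n, 0 ≤ K n) : Antitone (survival K) :=
  antitone_nat_of_succ_le fun m => by rw [survival_succ]; linarith [hK (m + 1)]

theorem sum_range_add_eq_survival_sub (a n : ℕ) :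
    ∑ s ∈ range n, K (a + 1 + s) = survival K a - survival K (a + n) := by
  induction n with
  | zero => simp
  | succ n ih => rw [sum_range_succ, ih, ← add_assoc, survival_succ, add_right_comm]; ring

end Survival

namespace IsRenewalSeq

variable {K u v : ℕ → ℝ}

theorem unique (hu : IsRenewalSeq K u) (hv : IsRenewalSeq K v) : u = v := by
  funext n
  induction n using Nat.strong_induction_on with
  | _ n ih =>
    cases n with
    | zero => rw [hu.zero, hv.zero]
    | succ n =>
      rw [hu.succ, hv.succ]
      exact sum_congr rfl fun m hm => by rw [ih m (mem_range.1 hm)]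

theorem nonneg (hu : IsRenewalSeq K u) (hK : ∀ n, 0 ≤ K n) (n : ℕ) : 0 ≤ u n := by
  induction n using Nat.strong_induction_on with
  | _ n ih =>
    cases n with
    | zero => rw [hu.zero]; exact zero_le_one
    | succ n =>
      rw [hu.succ]
      exact sum_nonneg fun m hm => mul_nonneg (hK _) (ih m (mem_range.1 hm))

theorem sum_mul_survival (hu : IsRenewalSeq K u) (hK0 : K 0 = 0) (m : ℕ) :
    ∑ k ∈ range (m + 1), u k * survival K (m - k) = 1 := by
  induction m with
  | zero => simp [survival, hu.zero, hK0]
  | succ m ih =>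
    have hstep : ∀ k ∈ range (m + 1),
        u k * survival K (m + 1 - k) = u k * survival K (m - k) - K (m + 1 - k) * u k := by
      intro k hk
      rw [Nat.sub_add_comm (mem_range_succ_iff.1 hk), survival_succ]
      ring
    rw [sum_range_succ, sum_congr rfl hstep, sum_sub_distrib, ih, ← hu.succ, Nat.sub_self]
    simp [survival, hK0]

theorem succ_eq_sum_reflect (hu : IsRenewalSeq K u) (n : ℕ) :
    u (n + 1) = ∑ s ∈ range (n + 1), K (s + 1) * u (n - s) := by
  rw [hu.succ, ← sum_range_reflect]
  refine sum_congr rfl fun m hm => ?_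
  have hm := mem_range.1 hm
  rw [Nat.add_sub_cancel, show n + 1 - (n - m) = m + 1 by omega]

/-- Decomposition of `u (n + ℓ + 1)` according to the last renewal `k ≤ ℓ` and the next one,
at `ℓ + 1 + s`. -/
theorem add_succ_eq_sum (hu : IsRenewalSeq K u) (n ℓ : ℕ) :
    u (n + ℓ + 1) =
      ∑ s ∈ range (n + 1), (∑ k ∈ range (ℓ + 1), u k * K (ℓ + 1 + s - k)) * u (n - s) := by
  induction ℓ generalizing n with
  | zero =>
    rw [hu.succ_eq_sum_reflect]
    simp [hu.zero, add_comm]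
  | succ ℓ ih =>
    have hsplit : ∀ s ∈ range (n + 1),
        (∑ k ∈ range (ℓ + 2), u k * K (ℓ + 2 + s - k)) * u (n - s) =
          (∑ k ∈ range (ℓ + 1), u k * K (ℓ + 1 + (s + 1) - k)) * u (n + 1 - (s + 1)) +
            u (ℓ + 1) * (K (s + 1) * u (n - s)) := by
      intro s _
      rw [sum_range_succ, show ℓ + 2 + s - (ℓ + 1) = s + 1 by omega, Nat.add_sub_add_right]
      have harg : ∀ k ∈ range (ℓ + 1), u k * K (ℓ + 2 + s - k) = u k * K (ℓ + 1 + (s + 1) - k) :=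
        fun k _ => by rw [show ℓ + 2 + s = ℓ + 1 + (s + 1) by omega]
      rw [sum_congr rfl harg]
      ring
    have hfirst : ∑ k ∈ range (ℓ + 1), u k * K (ℓ + 1 + 0 - k) = u (ℓ + 1) := by
      rw [hu.succ]
      exact sum_congr rfl fun k _ => by rw [add_zero, mul_comm]
    rw [show n + (ℓ + 1) + 1 = n + 1 + ℓ + 1 by omega, ih, sum_range_succ', sum_congr rfl hsplit,
      sum_add_distrib, ← mul_sum, ← hu.succ_eq_sum_reflect, hfirst, Nat.sub_zero]

theorem sub_le_of_antitone (hu : IsRenewalSeq K u) (hK0 : K 0 = 0) (hK : ∀ n, 0 ≤ K n)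
    (hanti : Antitone u) (n ℓ : ℕ) :
    u n - u (n + ℓ) ≤ u n * survival K n * ∑ k ∈ range ℓ, u k := by
  obtain _ | ℓ := ℓ
  · simp
  have hunn := hu.nonneg hK
  let H s := ∑ k ∈ range (ℓ + 1), u k * K (ℓ + 1 + s - k)
  have hlower : u n * ∑ s ∈ range (n + 1), H s ≤ u (n + ℓ + 1) := by
    rw [hu.add_succ_eq_sum, mul_sum]
    refine sum_le_sum fun s _ => ?_
    rw [mul_comm (H s)]
    exact mul_le_mul_of_nonneg_right (hanti (Nat.sub_le n s))
      (sum_nonneg fun k _ => mul_nonneg (hunn k) (hK _))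
  have hmass : ∑ s ∈ range (n + 1), H s =
      1 - ∑ k ∈ range (ℓ + 1), u k * survival K (ℓ - k + (n + 1)) := by
    rw [sum_comm, ← hu.sum_mul_survival hK0 ℓ, ← sum_sub_distrib]
    refine sum_congr rfl fun k hk => ?_
    have hk := mem_range_succ_iff.1 hk
    rw [← mul_sum, ← mul_sub, ← sum_range_add_eq_survival_sub]
    exact congrArg _ (sum_congr rfl fun s _ => congrArg K (by omega))
  have htail : ∑ k ∈ range (ℓ + 1), u k * survival K (ℓ - k + (n + 1)) ≤
      survival K n * ∑ k ∈ range (ℓ + 1), u k := by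
    rw [mul_sum]
    refine sum_le_sum fun k _ => ?_
    rw [mul_comm (survival K n)]
    exact mul_le_mul_of_nonneg_left (survival_antitone hK (by omega : n ≤ ℓ - k + (n + 1))) (hunn k)
  calc u n - u (n + (ℓ + 1))
      ≤ u n * (1 - ∑ s ∈ range (n + 1), H s) := by rw [← add_assoc]; linarith
    _ ≤ u n * (survival K n * ∑ k ∈ range (ℓ + 1), u k) := by
        rw [hmass, sub_sub_cancel]
        exact mul_le_mul_of_nonneg_left htail (hunn n)
    _ = u n * survival K n * ∑ k ∈ range (ℓ + 1), u k := by ring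

end IsRenewalSeq

theorem renewal_coupling_bound_general (K u : ℕ → ℝ)
    (hK0 : K 0 = 0)
    (hnorm : HasSum K 1)
    (p : ℕ → ℝ) (hp0 : p 0 = 1) (hp : ∀ i, 0 ≤ p i ∧ p i ≤ 1)
    (hfirst : ∀ n : ℕ, 1 ≤ n → K n = firstReturnProb p (2 * n))
    (hu0 : u 0 = 1)
    (hren : ∀ n : ℕ, u (n + 1) = ∑ m ∈ Finset.range (n + 1), K (n + 1 - m) * u m) :
    ∀ n ℓ : ℕ,
      0 ≤ u n - u (n + ℓ) ∧
      u n - u (n + ℓ) ≤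
        u n * (∑' k : ℕ, if n < k then K k else 0) * ∑ k ∈ Finset.range ℓ, u k := by
  have hu : IsRenewalSeq K u := ⟨hu0, hren⟩
  have hK : ∀ n, 0 ≤ K n := by
    rintro (_ | n)
    · exact hK0.ge
    · exact (hfirst _ n.succ_pos).symm ▸ firstReturnProb_nonneg hp _
  have hanti : Antitone u := by
    rw [hu.unique (isRenewalSeq_transFromZero hfirst)]
    exact transFromZero_two_mul_antitone hp0 hp
  intro n ℓ
  rw [(hasSum_survival hnorm n).tsum_eq]
  exact ⟨sub_nonneg.2 (hanti (Nat.le_add_right n ℓ)), hu.sub_le_of_antitone hK0 hK hanti n ℓ⟩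

/-- Let `τ` be a non-terminating renewal process with `P(τ₁ = n) = L(n) n^{-(1+α)}`,
`α ∈ (0,1)`, `L` slowly varying, such that `2τ₁` is distributed as the first return time to
zero of a nearest-neighbor Markov chain on `ℕ₀` with `±1` increments. Then (via the coupling
of two copies of the chain started at times `−2ℓ` and `0`)
`0 ≤ u(n) − u(n+ℓ) ≤ u(n) P(τ₁ > n) ∑_{k=0}^{ℓ−1} u(k)`, where `u(m) := P(m ∈ τ)`. -/
theorem renewal_coupling_bound (α : ℝ) (hα : 0 < α ∧ α < 1) (L K u : ℕ → ℝ)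
    (hL : SlowlyVarying L)
    (hK : ∀ n : ℕ, 1 ≤ n → K n = L n / (n : ℝ) ^ (1 + α)) (hK0 : K 0 = 0)
    (hnorm : HasSum K 1)
    (p : ℕ → ℝ) (hp0 : p 0 = 1) (hp : ∀ i, 0 ≤ p i ∧ p i ≤ 1)
    (hfirst : ∀ n : ℕ, 1 ≤ n → K n = firstReturnProb p (2 * n))
    (hu0 : u 0 = 1)
    (hren : ∀ n : ℕ, u (n + 1) = ∑ m ∈ Finset.range (n + 1), K (n + 1 - m) * u m) :
    ∀ n ℓ : ℕ,
      0 ≤ u n - u (n + ℓ) ∧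
      u n - u (n + ℓ) ≤
        u n * (∑' k : ℕ, if n < k then K k else 0) * ∑ k ∈ Finset.range ℓ, u k :=
  renewal_coupling_bound_general K u hK0 hnorm p hp0 hp hfirst hu0 hren
end

section
/- Let u: ℕ₀ → (0,∞) satisfy u(k) ∼ C_α/(L(k) k^{1−α}) as k → ∞, with α ∈ (0,1), C_α > 0, and L slowly varying. Then ∑_{k=0}^{ℓ−1} u(k) ∼ C_α ℓ^α/(α L(ℓ)) as ℓ → ∞. -/
/-!
Write `S n = ∑_{k<n} k^(α-1) / L k` and `g n = n^α / (α L n)`. By the uniform convergence theorem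
for slowly varying sequences (proved from Egorov's theorem), `L k / L n` is uniformly close to `1`
for `k ∈ [η n / 2, n]`; splitting `S n` at `a = ⌊η n⌋` and comparing the tail with `∫ x^(α-1)`
gives `e^(-η) (1 - η^α) ≤ S n / g n ≤ e^η η^α S a / g a + e^η`. Iterating the upper bound shows
that `S / g` is bounded, and then both bounds squeeze `S / g` to `1` as `η → 0`. Since
`g (2n) / g n → 2^α ≠ 1`, `g` and hence `S` cannot converge, so `S → ∞` and the equivalence
`u k ∼ C_α k^(α-1) / L k` passes to the partial sums.
-/

open Filter

open Topology MeasureTheory Finset Asymptotics Real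

lemma tendsto_of_forall_eventually_le_le {ι κ α : Type*} [TopologicalSpace α] [LinearOrder α]
    [OrderTopology α] {l : Filter ι} {F : Filter κ} [F.NeBot] {R : ι → α} {lo hi : κ → α} {x : α}
    (hlo : Tendsto lo F (𝓝 x)) (hhi : Tendsto hi F (𝓝 x))
    (h : ∀ᶠ η in F, ∀ᶠ n in l, lo η ≤ R n ∧ R n ≤ hi η) : Tendsto R l (𝓝 x) := by
  refine tendsto_order.2 ⟨fun a ha => ?_, fun b hb => ?_⟩
  · obtain ⟨η, hη, hR⟩ := ((hlo.eventually (lt_mem_nhds ha)).and h).exists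
    exact hR.mono fun n hn => hη.trans_le hn.1
  · obtain ⟨η, hη, hR⟩ := ((hhi.eventually (gt_mem_nhds hb)).and h).exists
    exact hR.mono fun n hn => hn.2.trans_lt hη

lemma bddAbove_range_of_eventually_le_mul_add {R : ℕ → ℝ} {q c : ℝ} (hq0 : 0 ≤ q) (hq1 : q < 1)
    (h : ∀ᶠ n in atTop, ∃ m < n, R n ≤ q * R m + c) : BddAbove (Set.range R) := by
  obtain ⟨N, hN⟩ := eventually_atTop.1 h
  obtain ⟨B, hB⟩ := ((range N).image R).bddAbove
  refine ⟨max B (c / (1 - q)), Set.forall_mem_range.2 fun n => ?_⟩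
  induction n using Nat.strong_induction_on with
  | _ n ih =>
    rcases lt_or_ge n N with hn | hn
    · exact (hB (by simpa using ⟨n, hn, rfl⟩)).trans (le_max_left _ _)
    · obtain ⟨m, hmn, hRm⟩ := hN n hn
      have hc : c ≤ (1 - q) * max B (c / (1 - q)) := by
        rw [← div_le_iff₀' (by linarith)]
        exact le_max_right _ _
      calc R n ≤ q * R m + c := hRm
        _ ≤ q * max B (c / (1 - q)) + c := by gcongr; exact ih m hmn
        _ ≤ max B (c / (1 - q)) := by linarith

theorem Asymptotics.IsEquivalent.sum_range {u v : ℕ → ℝ} (h : u ~[atTop] v) (hv : 0 ≤ v)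
    (hsum : Tendsto (fun n => ∑ i ∈ range n, v i) atTop atTop) :
    (fun n => ∑ i ∈ range n, u i) ~[atTop] fun n => ∑ i ∈ range n, v i := by
  refine IsLittleO.isEquivalent ((h.isLittleO.sum_range hv hsum).congr_left fun n => ?_)
  simp [sum_sub_distrib]

lemma tendsto_rpow_nhdsGT_zero {α : ℝ} (hα0 : 0 < α) :
    Tendsto (fun η : ℝ => η ^ α) (𝓝[>] 0) (𝓝 0) := by
  simpa [zero_rpow hα0.ne'] using
    ((continuousAt_rpow_const 0 α (Or.inr hα0.le)).tendsto).mono_left nhdsWithin_le_nhds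

lemma Nat.floor_mul_floor_eq_or {c x : ℝ} {k : ℕ} (hc0 : 0 ≤ c) (hc1 : c ≤ 1) (hx : 0 ≤ x)
    (hk : c * x = k) : ⌊c * ⌊x⌋₊⌋₊ = k ∨ ⌊c * ⌊x⌋₊⌋₊ + 1 = k := by
  have hle : c * ⌊x⌋₊ ≤ k := hk ▸ mul_le_mul_of_nonneg_left (Nat.floor_le hx) hc0
  have hgt : (k : ℝ) - 1 ≤ c * ⌊x⌋₊ := by
    nlinarith [mul_le_mul_of_nonneg_left (Nat.lt_floor_add_one x).le hc0]
  have h1 : ⌊c * ⌊x⌋₊⌋₊ ≤ k := Nat.floor_le_of_le hle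
  have h2 : k < ⌊c * ⌊x⌋₊⌋₊ + 2 := by
    have := Nat.lt_floor_add_one (c * ⌊x⌋₊)
    exact_mod_cast (show (k : ℝ) < ⌊c * ⌊x⌋₊⌋₊ + 2 by linarith)
  omega

lemma Nat.floor_inv_sqrt_two_mul_floor_sqrt_two_mul {n : ℕ} (hn : n ≠ 0) :
    ⌊(√2)⁻¹ * ⌊√2 * n⌋₊⌋₊ = n - 1 := by
  have hs : 1 < √2 := one_lt_sqrt_two
  have hlt : (⌊√2 * n⌋₊ : ℝ) < √2 * n :=
    (Nat.floor_le (by positivity)).lt_of_ne ((irrational_sqrt_two.mul_natCast hn).ne_nat _).symm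
  have hgt := Nat.lt_floor_add_one (√2 * n)
  rw [Nat.floor_eq_iff (by positivity), Nat.cast_sub (by omega), Nat.cast_one, sub_add_cancel,
    le_inv_mul_iff₀ (by positivity), inv_mul_lt_iff₀ (by positivity)]
  constructor <;> nlinarith

lemma exists_mem_Icc_notMem_and_sub_notMem {B : Set ℝ} (hB : MeasurableSet B)
    (hvol : volume B < 1 / 2) (t : ℝ) : ∃ s ∈ Set.Icc (0 : ℝ) 1, s ∉ B ∧ t - s ∉ B := by
  by_contra! hcover
  have hsub : Set.Icc (0 : ℝ) 1 ⊆ B ∪ (fun s => t - s) ⁻¹' B := fun s hs =>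
    or_iff_not_imp_left.2 (hcover s hs)
  have := (measure_mono (μ := volume) hsub).trans (measure_union_le _ _)
  rw [(Measure.measurePreserving_sub_left volume t).measure_preimage hB.nullMeasurableSet,
    Real.volume_Icc, sub_zero, ENNReal.ofReal_one] at this
  exact this.not_gt (by simpa [ENNReal.inv_two_add_inv_two] using ENNReal.add_lt_add hvol hvol)

lemma antitoneOn_rpow_sub_one {α : ℝ} (hα1 : α ≤ 1) {a b : ℝ} (ha : 0 < a) :
    AntitoneOn (fun x : ℝ => x ^ (α - 1)) (Set.Icc a b) := fun _ hx _ _ hxy =>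
  rpow_le_rpow_of_nonpos (ha.trans_le hx.1) hxy (by linarith)

lemma integral_rpow_sub_one {α : ℝ} (hα0 : 0 < α) (a b : ℝ) :
    ∫ x in a..b, x ^ (α - 1) = (b ^ α - a ^ α) / α := by
  rw [integral_rpow (Or.inl (by linarith)), sub_add_cancel]

lemma le_sum_Ico_rpow_sub_one {α : ℝ} (hα0 : 0 < α) (hα1 : α ≤ 1) {a b : ℕ} (ha : 1 ≤ a)
    (hab : a ≤ b) : ((b : ℝ) ^ α - (a : ℝ) ^ α) / α ≤ ∑ k ∈ Ico a b, (k : ℝ) ^ (α - 1) := by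
  rw [← integral_rpow_sub_one hα0]
  exact AntitoneOn.integral_le_sum_Ico hab (antitoneOn_rpow_sub_one hα1 (by exact_mod_cast ha))

lemma sum_Ico_rpow_sub_one_le {α : ℝ} (hα0 : 0 < α) (hα1 : α ≤ 1) {a b : ℕ} (ha : 2 ≤ a)
    (hab : a ≤ b) : ∑ k ∈ Ico a b, (k : ℝ) ^ (α - 1) ≤ (b : ℝ) ^ α / α := by
  obtain ⟨a, rfl⟩ : ∃ a', a = a' + 1 := ⟨a - 1, by omega⟩
  obtain ⟨b, rfl⟩ : ∃ b', b = b' + 1 := ⟨b - 1, by omega⟩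
  have hsum := AntitoneOn.sum_le_integral_Ico (by omega : a ≤ b)
    (antitoneOn_rpow_sub_one hα1 (by exact_mod_cast (by omega : 0 < a)))
  rw [integral_rpow_sub_one hα0, sum_Ico_add' (fun k : ℕ => (k : ℝ) ^ (α - 1))] at hsum
  refine hsum.trans (div_le_div_of_nonneg_right ?_ hα0.le)
  have : (b : ℝ) ^ α ≤ ((b + 1 : ℕ) : ℝ) ^ α := by gcongr; simp
  linarith [rpow_nonneg (Nat.cast_nonneg a) α]

section AdditiveSlowVariation

variable {h : ℕ → ℝ}

lemma tendsto_pred_sub_of_tendsto_floor_sub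
    (hh : ∀ lam : ℝ, 0 < lam → Tendsto (fun n : ℕ => h ⌊lam * n⌋₊ - h n) atTop (𝓝 0)) :
    Tendsto (fun n => h (n - 1) - h n) atTop (𝓝 0) := by
  have hs : (0 : ℝ) < √2 := by positivity
  have hfloor : Tendsto (fun n : ℕ => ⌊√2 * n⌋₊) atTop atTop :=
    tendsto_nat_floor_atTop.comp (tendsto_natCast_atTop_atTop.const_mul_atTop hs)
  have := ((hh _ (inv_pos.2 hs)).comp hfloor).add (hh _ hs)
  rw [add_zero] at this
  refine this.congr' ((eventually_ne_atTop 0).mono fun n hn => ?_)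
  simp [Nat.floor_inv_sqrt_two_mul_floor_sqrt_two_mul hn]

lemma exists_measure_lt_eventually_abs_floor_exp_sub_lt
    (hh : ∀ lam : ℝ, 0 < lam → Tendsto (fun n : ℕ => h ⌊lam * n⌋₊ - h n) atTop (𝓝 0))
    (a b : ℝ) {ε : ℝ} (hε : 0 < ε) :
    ∃ B : Set ℝ, MeasurableSet B ∧ volume B < 1 / 2 ∧
      ∀ᶠ n : ℕ in atTop, ∀ t ∈ Set.Icc a b \ B, |h ⌊exp t * n⌋₊ - h n| < ε := by
  have hmeas (n : ℕ) : StronglyMeasurable fun t => h ⌊exp t * n⌋₊ - h n :=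
    ((measurable_from_top.comp (measurable_exp.mul_const _).nat_floor).sub_const
      _).stronglyMeasurable
  obtain ⟨B, -, hBm, hBvol, hunif⟩ := tendstoUniformlyOn_of_ae_tendsto (μ := volume) hmeas
    stronglyMeasurable_const measurableSet_Icc (by simp)
    (ae_of_all _ fun t _ => hh _ (exp_pos t)) (show (0 : ℝ) < 1 / 4 by norm_num)
  refine ⟨B, hBm, hBvol.trans_lt ?_, ?_⟩
  · rw [ENNReal.ofReal_lt_iff_lt_toReal (by norm_num) (by simp)]
    norm_num
  · filter_upwards [Metric.tendstoUniformlyOn_iff.1 hunif ε hε] with n hn t ht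
    simpa [Real.dist_eq, abs_sub_comm] using hn t ht

theorem eventually_abs_sub_le_of_tendsto_floor_sub
    (hh : ∀ lam : ℝ, 0 < lam → Tendsto (fun n : ℕ => h ⌊lam * n⌋₊ - h n) atTop (𝓝 0))
    {δ ε : ℝ} (hδ : 0 < δ) (hε : 0 < ε) :
    ∀ᶠ n : ℕ in atTop, ∀ k : ℕ, δ * n ≤ k → k ≤ n → |h k - h n| ≤ ε := by
  obtain ⟨B, hBm, hBvol, hB⟩ :=
    exists_measure_lt_eventually_abs_floor_exp_sub_lt hh (log δ - 1) 1 (by positivity : 0 < ε / 3)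
  obtain ⟨N, hN⟩ := eventually_atTop.1 hB
  obtain ⟨K, hK⟩ := eventually_atTop.1 ((tendsto_pred_sub_of_tendsto_floor_sub hh).eventually
    (Metric.closedBall_mem_nhds 0 (by positivity : 0 < ε / 3)))
  filter_upwards [eventually_ge_atTop N,
    (tendsto_natCast_atTop_atTop.const_mul_atTop hδ).eventually_ge_atTop (max K 1 : ℕ)]
    with n hnN hnK k hδk hkn
  have hKk : max K 1 ≤ k := by exact_mod_cast (show ((max K 1 : ℕ) : ℝ) ≤ k by linarith)
  have hk : (0 : ℝ) < k := by exact_mod_cast (show 1 ≤ k by omega)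
  have hn : (0 : ℝ) < n := by exact_mod_cast (show 1 ≤ n by omega)
  set t := log (k / n)
  have ht0 : t ≤ 0 := log_nonpos (by positivity) ((div_le_one hn).2 (by exact_mod_cast hkn))
  have htδ : log δ ≤ t := log_le_log hδ ((le_div_iff₀ hn).2 hδk)
  -- Go from `n` to `m = ⌊e^s n⌋` and on to `j = ⌊e^(t-s) m⌋ ∈ {k - 1, k}` with both exponents
  -- outside the bad set; a single step `n ↦ ⌊e^t n⌋` could land in it for every large `n`.
  obtain ⟨s, ⟨hs0, hs1⟩, hsB, htsB⟩ := exists_mem_Icc_notMem_and_sub_notMem hBm hBvol t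
  set m := ⌊exp s * n⌋₊ with hm
  set j := ⌊exp (t - s) * m⌋₊ with hj
  have hnm : n ≤ m := Nat.le_floor (by nlinarith [one_le_exp hs0])
  have hmn : |h m - h n| < ε / 3 := hN n hnN s ⟨⟨by linarith, hs1⟩, hsB⟩
  have hjm : |h j - h m| < ε / 3 := hN m (hnN.trans hnm) (t - s) ⟨⟨by linarith, by linarith⟩, htsB⟩
  have hkj : |h k - h j| ≤ ε / 3 := by
    have hjk := Nat.floor_mul_floor_eq_or (exp_pos (t - s)).le (exp_le_one_iff.2 (by linarith))
      (by positivity) (show exp (t - s) * (exp s * n) = k by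
        rw [← mul_assoc, ← exp_add, sub_add_cancel, exp_log (by positivity),
          div_mul_cancel₀ _ hn.ne'])
    rw [← hm, ← hj] at hjk
    rcases hjk with hjk | hjk
    · simp [hjk]; positivity
    · have := hK k (by omega)
      rw [← hjk, Nat.add_sub_cancel] at this
      rw [← hjk]
      simpa [Real.dist_eq, abs_sub_comm] using this
  calc |h k - h n| ≤ |h k - h j| + |h j - h n| := abs_sub_le _ _ _
    _ ≤ |h k - h j| + (|h j - h m| + |h m - h n|) := by gcongr; exact abs_sub_le _ _ _
    _ ≤ ε := by linarith

end AdditiveSlowVariation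

namespace SlowlyVarying

variable {L : ℕ → ℝ}

lemma tendsto_log_floor_sub (hL : SlowlyVarying L) {lam : ℝ} (hlam : 0 < lam) :
    Tendsto (fun n : ℕ => log (L ⌊lam * n⌋₊) - log (L n)) atTop (𝓝 0) := by
  have := (continuousAt_log one_ne_zero).tendsto.comp (hL.2 lam hlam)
  rw [log_one] at this
  refine this.congr fun n => ?_
  simp [log_div (hL.1 _).ne' (hL.1 _).ne']

theorem eventually_le_exp_mul (hL : SlowlyVarying L) {δ ε : ℝ} (hδ : 0 < δ) (hε : 0 < ε) :
    ∀ᶠ n : ℕ in atTop, ∀ k : ℕ, δ * n ≤ k → k ≤ n → L k ≤ exp ε * L n ∧ L n ≤ exp ε * L k := by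
  filter_upwards [eventually_abs_sub_le_of_tendsto_floor_sub (h := fun n => log (L n))
    (fun _ hlam => hL.tendsto_log_floor_sub hlam) hδ hε] with n hn k hδk hkn
  obtain ⟨h₁, h₂⟩ := abs_le.1 (hn k hδk hkn)
  constructor <;>
  · rw [← log_le_log_iff (hL.1 _) (by have := hL.1 k; have := hL.1 n; positivity),
      log_mul (exp_pos ε).ne' (hL.1 _).ne', log_exp]
    linarith

lemma tendsto_two_mul_div (hL : SlowlyVarying L) :
    Tendsto (fun n : ℕ => L (2 * n) / L n) atTop (𝓝 1) :=
  (hL.2 2 two_pos).congr fun n => by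
    rw [show (2 : ℝ) * n = ((2 * n : ℕ) : ℝ) by push_cast; ring, Nat.floor_natCast]

end SlowlyVarying

namespace Karamata

noncomputable def partialSum (α : ℝ) (L : ℕ → ℝ) (n : ℕ) : ℝ :=
  ∑ k ∈ range n, (k : ℝ) ^ (α - 1) / L k

noncomputable def profile (α : ℝ) (L : ℕ → ℝ) (n : ℕ) : ℝ := (n : ℝ) ^ α / (α * L n)

variable {α : ℝ} {L : ℕ → ℝ}

lemma partialSum_mono (hL : ∀ n, 0 < L n) : Monotone (partialSum α L) := fun _ _ hmn =>
  sum_le_sum_of_subset_of_nonneg (range_subset_range.2 hmn) fun k _ _ =>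
    div_nonneg (rpow_nonneg k.cast_nonneg _) (hL k).le

lemma partialSum_nonneg (hL : ∀ n, 0 < L n) (n : ℕ) : 0 ≤ partialSum α L n :=
  partialSum_mono hL (Nat.zero_le n)

lemma partialSum_two_pos (hL : ∀ n, 0 < L n) : 0 < partialSum α L 2 := by
  rw [partialSum, sum_range_succ, sum_range_one, Nat.cast_one, one_rpow]
  exact add_pos_of_nonneg_of_pos (div_nonneg (rpow_nonneg (Nat.cast_nonneg _) _) (hL 0).le)
    (by simpa using hL 1)

lemma profile_pos (hα0 : 0 < α) (hL : ∀ n, 0 < L n) {n : ℕ} (hn : n ≠ 0) : 0 < profile α L n := by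
  have := hL n
  unfold profile
  positivity

lemma partialSum_le_add_mul_profile (hα0 : 0 < α) (hα1 : α ≤ 1) (hL : ∀ n, 0 < L n) {a n : ℕ}
    (ha : 2 ≤ a) (han : a ≤ n) {c : ℝ} (hc0 : 0 ≤ c) (hc : ∀ k ∈ Ico a n, L n ≤ c * L k) :
    partialSum α L n ≤ partialSum α L a + c * profile α L n := by
  rw [partialSum, partialSum, ← sum_range_add_sum_Ico _ han]
  gcongr
  calc ∑ k ∈ Ico a n, (k : ℝ) ^ (α - 1) / L k
      ≤ ∑ k ∈ Ico a n, c / L n * (k : ℝ) ^ (α - 1) := sum_le_sum fun k hk => by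
        rw [div_mul_eq_mul_div, div_le_div_iff₀ (hL k) (hL n)]
        nlinarith [hc k hk, rpow_nonneg k.cast_nonneg (α - 1)]
    _ ≤ c / L n * ((n : ℝ) ^ α / α) := by
        rw [← mul_sum]
        exact mul_le_mul_of_nonneg_left (sum_Ico_rpow_sub_one_le hα0 hα1 ha han)
          (div_nonneg hc0 (hL n).le)
    _ = c * profile α L n := by
        unfold profile
        field_simp

lemma inv_mul_le_partialSum (hα0 : 0 < α) (hα1 : α ≤ 1) (hL : ∀ n, 0 < L n) {a n : ℕ}
    (ha : 1 ≤ a) (han : a ≤ n) {c : ℝ} (hc0 : 0 < c) (hc : ∀ k ∈ Ico a n, L k ≤ c * L n) :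
    c⁻¹ * (((n : ℝ) ^ α - (a : ℝ) ^ α) / (α * L n)) ≤ partialSum α L n := by
  have hcL : 0 < c * L n := mul_pos hc0 (hL n)
  calc c⁻¹ * (((n : ℝ) ^ α - (a : ℝ) ^ α) / (α * L n))
      = (c * L n)⁻¹ * (((n : ℝ) ^ α - (a : ℝ) ^ α) / α) := by field_simp
    _ ≤ (c * L n)⁻¹ * ∑ k ∈ Ico a n, (k : ℝ) ^ (α - 1) := by
        gcongr
        exact le_sum_Ico_rpow_sub_one hα0 hα1 ha han
    _ ≤ ∑ k ∈ Ico a n, (k : ℝ) ^ (α - 1) / L k := by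
        rw [mul_sum]
        refine sum_le_sum fun k hk => ?_
        rw [inv_mul_eq_div]
        exact div_le_div_of_nonneg_left (rpow_nonneg k.cast_nonneg _) (hL k) (hc k hk)
    _ ≤ partialSum α L n := by
        rw [partialSum, ← sum_range_add_sum_Ico _ han]
        exact le_add_of_nonneg_left (partialSum_nonneg hL a)

lemma profile_le (hα0 : 0 < α) (hL : ∀ n, 0 < L n) {a n : ℕ} {θ c : ℝ} (hθ : 0 ≤ θ)
    (ha : (a : ℝ) ≤ θ * n) (hc : L n ≤ c * L a) : profile α L a ≤ c * θ ^ α * profile α L n := by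
  have hLa := hL a
  have hLn := hL n
  have hpow : (a : ℝ) ^ α ≤ θ ^ α * (n : ℝ) ^ α := by
    rw [← mul_rpow hθ n.cast_nonneg]
    exact rpow_le_rpow a.cast_nonneg ha hα0.le
  calc profile α L a ≤ θ ^ α * (n : ℝ) ^ α / (α * L a) := by unfold profile; gcongr
    _ = θ ^ α * (n : ℝ) ^ α / (α * L n) * (L n / L a) := by field_simp
    _ ≤ θ ^ α * (n : ℝ) ^ α / (α * L n) * c := by
        gcongr
        rwa [div_le_iff₀ hLa]
    _ = c * θ ^ α * profile α L n := by unfold profile; ring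

lemma _root_.SlowlyVarying.not_tendsto_profile (hL : SlowlyVarying L) (hα : α ≠ 0) {l : ℝ}
    (hl : l ≠ 0) : ¬ Tendsto (profile α L) atTop (𝓝 l) := by
  intro h
  have h₁ : Tendsto (fun n => profile α L (2 * n) / profile α L n) atTop (𝓝 1) := by
    have := (h.comp (tendsto_id.const_mul_atTop' two_pos)).div h hl
    rwa [div_self hl] at this
  have h₂ : Tendsto (fun n => profile α L (2 * n) / profile α L n) atTop (𝓝 (2 ^ α)) := by
    have := (hL.tendsto_two_mul_div.inv₀ one_ne_zero).const_mul ((2 : ℝ) ^ α)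
    rw [inv_one, mul_one] at this
    refine this.congr' ((eventually_ne_atTop 0).mono fun n hn => ?_)
    have := hL.1 n
    have := hL.1 (2 * n)
    have : (0 : ℝ) < (n : ℝ) ^ α := rpow_pos_of_pos (by positivity) α
    simp only [profile, Nat.cast_mul, Nat.cast_ofNat,
      mul_rpow zero_le_two n.cast_nonneg]
    field_simp
  have h2α := congrArg log (tendsto_nhds_unique h₂ h₁)
  rw [log_rpow two_pos, log_one, mul_eq_zero] at h2α
  exact h2α.elim hα (log_pos one_lt_two).ne'

lemma eventually_ratio_le_and_le (hα0 : 0 < α) (hα1 : α ≤ 1) (hL : SlowlyVarying L) {η : ℝ}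
    (hη0 : 0 < η) (hη1 : η < 1) :
    ∀ᶠ n in atTop, ∃ a < n,
      partialSum α L n / profile α L n
        ≤ exp η * η ^ α * (partialSum α L a / profile α L a) + exp η ∧
      exp (-η) * (1 - η ^ α) ≤ partialSum α L n / profile α L n := by
  filter_upwards [hL.eventually_le_exp_mul (half_pos hη0) hη0,
    (tendsto_natCast_atTop_atTop.const_mul_atTop hη0).eventually_ge_atTop 2,
    eventually_ne_atTop 0] with n hUCT hηn hn0
  set a := ⌊η * n⌋₊
  have hn : (0 : ℝ) < n := by positivity
  have ha2 : 2 ≤ a := Nat.le_floor (by exact_mod_cast hηn)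
  have ha_le : (a : ℝ) ≤ η * n := Nat.floor_le (by positivity)
  have ha_ge : η / 2 * n ≤ a := by linarith [Nat.lt_floor_add_one (η * n)]
  have han : a < n := by exact_mod_cast ha_le.trans_lt (mul_lt_of_lt_one_left hn hη1)
  have hblock {k : ℕ} (hk : k ∈ Ico a n) :=
    hUCT k (ha_ge.trans (by exact_mod_cast (mem_Ico.1 hk).1)) (mem_Ico.1 hk).2.le
  have hprof := profile_pos hα0 hL.1 hn0
  refine ⟨a, han, ?_, ?_⟩
  · have hRa : 0 ≤ partialSum α L a / profile α L a :=
      div_nonneg (partialSum_nonneg hL.1 a) (profile_pos hα0 hL.1 (by omega)).le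
    rw [div_le_iff₀ hprof]
    calc partialSum α L n ≤ partialSum α L a + exp η * profile α L n :=
          partialSum_le_add_mul_profile hα0 hα1 hL.1 ha2 han.le (exp_pos η).le
            fun k hk => (hblock hk).2
      _ = partialSum α L a / profile α L a * profile α L a + exp η * profile α L n := by
          rw [div_mul_cancel₀ _ (profile_pos hα0 hL.1 (by omega)).ne']
      _ ≤ partialSum α L a / profile α L a * (exp η * η ^ α * profile α L n)
            + exp η * profile α L n := by
          gcongr
          exact profile_le hα0 hL.1 hη0.le ha_le (hUCT a ha_ge han.le).2
      _ = _ := by ring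
  · rw [le_div_iff₀ hprof]
    have hpow : (a : ℝ) ^ α ≤ η ^ α * (n : ℝ) ^ α := by
      rw [← mul_rpow hη0.le n.cast_nonneg]
      exact rpow_le_rpow a.cast_nonneg ha_le hα0.le
    refine le_trans ?_ (inv_mul_le_partialSum hα0 hα1 hL.1 (by omega) han.le (exp_pos η)
      fun k hk => (hblock hk).1)
    have := hL.1 n
    rw [exp_neg, mul_assoc]
    gcongr
    unfold profile
    have : (a : ℝ) ^ α / (α * L n) ≤ η ^ α * ((n : ℝ) ^ α / (α * L n)) := by
      rw [← mul_div_assoc]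
      gcongr
    rw [one_sub_mul, sub_div]
    linarith

lemma bddAbove_range_ratio (hα0 : 0 < α) (hα1 : α ≤ 1) (hL : SlowlyVarying L) :
    BddAbove (Set.range fun n => partialSum α L n / profile α L n) := by
  have hq : Tendsto (fun η : ℝ => exp η * η ^ α) (𝓝[>] 0) (𝓝 0) := by
    simpa using ((continuous_exp.tendsto 0).mono_left nhdsWithin_le_nhds).mul
      (tendsto_rpow_nhdsGT_zero hα0)
  obtain ⟨η, hq1, hη0, hη1⟩ :=
    ((hq.eventually (gt_mem_nhds one_pos)).and (Ioo_mem_nhdsGT one_pos)).exists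
  exact bddAbove_range_of_eventually_le_mul_add (by positivity) hq1
    ((eventually_ratio_le_and_le hα0 hα1 hL hη0 hη1).mono fun n ⟨a, han, hup, _⟩ => ⟨a, han, hup⟩)

theorem isEquivalent_partialSum_profile (hα0 : 0 < α) (hα1 : α ≤ 1) (hL : SlowlyVarying L) :
    partialSum α L ~[atTop] profile α L := by
  obtain ⟨B, hB⟩ := bddAbove_range_ratio hα0 hα1 hL
  have hexp : Tendsto exp (𝓝[>] 0) (𝓝 1) := by
    simpa using (continuous_exp.tendsto 0).mono_left nhdsWithin_le_nhds
  refine isEquivalent_of_tendsto_one (tendsto_of_forall_eventually_le_le (F := 𝓝[>] 0)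
    (lo := fun η => exp (-η) * (1 - η ^ α)) (hi := fun η => exp η * η ^ α * B + exp η)
    ?_ ?_ ?_)
  · simpa using (((continuous_exp.comp continuous_neg).tendsto 0).mono_left nhdsWithin_le_nhds).mul
      (tendsto_const_nhds.sub (tendsto_rpow_nhdsGT_zero hα0))
  · simpa using ((hexp.mul (tendsto_rpow_nhdsGT_zero hα0)).mul_const B).add hexp
  · filter_upwards [Ioo_mem_nhdsGT one_pos] with η ⟨hη0, hη1⟩
    filter_upwards [eventually_ratio_le_and_le hα0 hα1 hL hη0 hη1] with n ⟨a, _, hup, hlo⟩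
    exact ⟨hlo, hup.trans (by gcongr; exact hB ⟨a, rfl⟩)⟩

theorem tendsto_partialSum_atTop (hα0 : 0 < α) (hα1 : α ≤ 1) (hL : SlowlyVarying L) :
    Tendsto (partialSum α L) atTop atTop := by
  refine (tendsto_atTop_of_monotone (partialSum_mono hL.1)).resolve_right ?_
  rintro ⟨l, hl⟩
  have hl0 : 0 < l := (partialSum_two_pos hL.1).trans_le ((partialSum_mono hL.1).ge_of_tendsto hl 2)
  exact hL.not_tendsto_profile hα0.ne' hl0.ne'
    ((isEquivalent_partialSum_profile hα0 hα1 hL).tendsto_nhds hl)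

end Karamata

theorem karamata_sum_asymptotic_general (α Cα : ℝ) (hα : 0 < α ∧ α < 1) (hCα : 0 < Cα)
    (L u : ℕ → ℝ) (hL : SlowlyVarying L)
    (hu : Tendsto (fun k : ℕ => u k / (Cα / (L k * (k : ℝ) ^ (1 - α)))) atTop (nhds 1)) :
    Tendsto
      (fun ℓ : ℕ => (∑ k ∈ Finset.range ℓ, u k) / (Cα * (ℓ : ℝ) ^ α / (α * L ℓ)))
      atTop (nhds 1) := by
  obtain ⟨hα0, hα1⟩ := hα
  have hterm : u ~[atTop] fun k => Cα * ((k : ℝ) ^ (α - 1) / L k) := by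
    refine isEquivalent_of_tendsto_one (hu.congr fun k => ?_)
    rw [Pi.div_apply, show α - 1 = -(1 - α) by ring, rpow_neg k.cast_nonneg]
    ring
  have hsum : (fun ℓ => ∑ k ∈ range ℓ, u k) ~[atTop] fun ℓ => Cα * Karamata.partialSum α L ℓ := by
    simpa only [Karamata.partialSum, mul_sum] using hterm.sum_range
      (fun k => mul_nonneg hCα.le (div_nonneg (rpow_nonneg k.cast_nonneg _) (hL.1 k).le))
      (by simpa only [Karamata.partialSum, mul_sum] using
        (Karamata.tendsto_partialSum_atTop hα0 hα1.le hL).const_mul_atTop hCα)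
  have hmain : (fun ℓ => ∑ k ∈ range ℓ, u k) ~[atTop] fun ℓ => Cα * Karamata.profile α L ℓ :=
    hsum.trans (IsEquivalent.refl.mul (Karamata.isEquivalent_partialSum_profile hα0 hα1.le hL))
  rw [isEquivalent_iff_tendsto_one ((eventually_ne_atTop 0).mono fun n hn =>
    mul_ne_zero hCα.ne' (Karamata.profile_pos hα0 hL.1 hn).ne')] at hmain
  simpa only [Karamata.profile, mul_div_assoc, Pi.div_def] using hmain

/-- Karamata's theorem for sums: if `u(k) ∼ C_α/(L(k) k^{1−α})` as `k → ∞`, with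
`α ∈ (0,1)`, `C_α > 0` and `L` slowly varying, then
`∑_{k=0}^{ℓ−1} u(k) ∼ C_α ℓ^α/(α L(ℓ))` as `ℓ → ∞`. -/
theorem karamata_sum_asymptotic (α Cα : ℝ) (hα : 0 < α ∧ α < 1) (hCα : 0 < Cα)
    (L u : ℕ → ℝ) (hL : SlowlyVarying L) (hupos : ∀ k, 0 < u k)
    (hu : Tendsto (fun k : ℕ => u k / (Cα / (L k * (k : ℝ) ^ (1 - α)))) atTop (nhds 1)) :
    Tendsto
      (fun ℓ : ℕ => (∑ k ∈ Finset.range ℓ, u k) / (Cα * (ℓ : ℝ) ^ α / (α * L ℓ)))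
      atTop (nhds 1) :=
  karamata_sum_asymptotic_general α Cα hα hCα L u hL hu
end

section
/- For a closed set C ⊆ ℝ and t ∈ ℝ, define g_t(C) := sup{x ∈ C : x ≤ t} (with sup ∅ = −∞). Then for fixed t and C, the map g_t from the space of closed sets (with the Fell–Matheron topology) to ℝ̄ is continuous at C if and only if the function s ↦ g_s(C) is continuous at s = t. -/
/-!
Write `g_{t−}(C) = sup {x ∈ C : x < t}`. Since `s ↦ g_s(C)` is monotone with left limit
`g_{t−}(C)` and is right-continuous (at a point of `C` it is squeezed between `t` and `s`, off
the closed set `C` it is locally constant to the right), its continuity at `t` means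
`g_{t−}(C) = g_t(C)`. The hit condition of Fell–Matheron convergence bounds `g_t(C_n)` eventually
from below by anything below `g_{t−}(C)`, the miss condition applied to `[b, t]` with
`g_t(C) < b` bounds it from above by `b`; so equality gives continuity of `g_t`. Conversely the translates
`C + 1/(n+1)` converge to `C`, and `g_t(C + a) ≤ g_{t−}(C) + a`, so continuity of `g_t` forces
`g_t(C) ≤ g_{t−}(C)`.
-/

open Filter

/-- `gSet t C = sup {x ∈ C : x ≤ t}`, with values in `ℝ̄ = ℝ ∪ {±∞}` and `sup ∅ = −∞`. -/
noncomputable def gSet (t : ℝ) (C : Set ℝ) : EReal :=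
  sSup {x : EReal | ∃ r : ℝ, r ∈ C ∧ r ≤ t ∧ x = (r : EReal)}

/-- Convergence `C_n → C` in the Fell–Matheron topology on closed subsets of `ℝ`:
every open set meeting `C` eventually meets `C_n`, and every compact set disjoint
from `C` is eventually disjoint from `C_n`. -/
def FMconv (Cn : ℕ → Set ℝ) (C : Set ℝ) : Prop :=
  (∀ G : Set ℝ, IsOpen G → (G ∩ C).Nonempty → ∀ᶠ n in atTop, (G ∩ Cn n).Nonempty) ∧
  (∀ K : Set ℝ, IsCompact K → K ∩ C = ∅ → ∀ᶠ n in atTop, K ∩ Cn n = ∅)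

open Set Topology

/-- `g_{t−}(C)`, the left limit of `s ↦ g_s(C)` at `t`. -/
noncomputable def gSetLT (t : ℝ) (C : Set ℝ) : EReal :=
  sSup {x : EReal | ∃ r : ℝ, r ∈ C ∧ r < t ∧ x = (r : EReal)}

section Basic

variable {C : Set ℝ} {r s t : ℝ}

lemma coe_le_gSet (hr : r ∈ C) (hrt : r ≤ t) : (r : EReal) ≤ gSet t C :=
  le_sSup ⟨r, hr, hrt, rfl⟩

lemma gSet_le {b : EReal} (h : ∀ r ∈ C, r ≤ t → (r : EReal) ≤ b) : gSet t C ≤ b :=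
  sSup_le <| by rintro x ⟨r, hr, hrt, rfl⟩; exact h r hr hrt

lemma coe_le_gSetLT (hr : r ∈ C) (hrt : r < t) : (r : EReal) ≤ gSetLT t C :=
  le_sSup ⟨r, hr, hrt, rfl⟩

lemma exists_lt_of_lt_gSetLT {c : EReal} (h : c < gSetLT t C) : ∃ r ∈ C, r < t ∧ c < r := by
  obtain ⟨_, ⟨r, hr, hrt, rfl⟩, hcr⟩ := lt_sSup_iff.1 h
  exact ⟨r, hr, hrt, hcr⟩

lemma gSet_le_coe (C : Set ℝ) (t : ℝ) : gSet t C ≤ t :=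
  gSet_le fun _ _ hrt => EReal.coe_le_coe hrt

lemma gSet_of_mem (ht : t ∈ C) : gSet t C = t :=
  (gSet_le_coe C t).antisymm (coe_le_gSet ht le_rfl)

lemma gSet_mono (C : Set ℝ) : Monotone fun s => gSet s C :=
  fun _ _ hst => gSet_le fun _ hr hrs => coe_le_gSet hr (hrs.trans hst)

lemma gSetLT_le_gSet (C : Set ℝ) (t : ℝ) : gSetLT t C ≤ gSet t C :=
  sSup_le <| by rintro x ⟨r, hr, hrt, rfl⟩; exact coe_le_gSet hr hrt.le

lemma gSet_le_gSetLT (hst : s < t) : gSet s C ≤ gSetLT t C :=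
  gSet_le fun _ hr hrs => coe_le_gSetLT hr (hrs.trans_lt hst)

end Basic

section Continuity

variable {C : Set ℝ} {t : ℝ}

lemma continuousWithinAt_Iic_gSet_iff :
    ContinuousWithinAt (fun s => gSet s C) (Iic t) t ↔ gSetLT t C = gSet t C := by
  refine ⟨fun h => (gSetLT_le_gSet C t).antisymm ?_, fun h => ?_⟩
  · refine le_of_tendsto (h.mono Iio_subset_Iic_self) ?_
    filter_upwards [self_mem_nhdsWithin] with s hs using gSet_le_gSetLT hs
  · refine tendsto_order.2 ⟨fun c hc => ?_, fun c hc => ?_⟩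
    · obtain ⟨r, hr, hrt, hcr⟩ := exists_lt_of_lt_gSetLT (hc.trans_eq h.symm)
      filter_upwards [nhdsWithin_le_nhds (Ioi_mem_nhds hrt)] with s hs
      exact hcr.trans_le (coe_le_gSet hr (le_of_lt hs))
    · filter_upwards [self_mem_nhdsWithin] with s hs using (gSet_mono C hs).trans_lt hc

lemma gSet_eventuallyEq_of_notMem (hC : IsClosed C) (ht : t ∉ C) :
    (fun s => gSet s C) =ᶠ[𝓝[≥] t] fun _ => gSet t C := by
  obtain ⟨u, htu, hu⟩ := mem_nhdsGE_iff_exists_Ico_subset.1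
    (nhdsWithin_le_nhds (hC.isOpen_compl.mem_nhds ht))
  filter_upwards [Ico_mem_nhdsGE htu] with s hs
  refine (gSet_le fun r hr hrs => coe_le_gSet hr ?_).antisymm (gSet_mono C hs.1)
  by_contra! htr
  exact hu ⟨htr.le, hrs.trans_lt hs.2⟩ hr

lemma continuousWithinAt_Ici_gSet (hC : IsClosed C) (t : ℝ) :
    ContinuousWithinAt (fun s => gSet s C) (Ici t) t := by
  by_cases ht : t ∈ C
  · have hcoe : Tendsto (fun s : ℝ => (s : EReal)) (𝓝[≥] t) (𝓝 (gSet t C)) :=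
      gSet_of_mem ht ▸ continuous_coe_real_ereal.continuousWithinAt
    refine tendsto_of_tendsto_of_tendsto_of_le_of_le' tendsto_const_nhds hcoe ?_
      (Eventually.of_forall fun s => gSet_le_coe C s)
    filter_upwards [self_mem_nhdsWithin] with s hs using gSet_mono C hs
  · exact tendsto_const_nhds.congr' (gSet_eventuallyEq_of_notMem hC ht).symm

lemma continuousAt_gSet_iff (hC : IsClosed C) :
    ContinuousAt (fun s => gSet s C) t ↔ gSetLT t C = gSet t C := by
  rw [continuousAt_iff_continuous_left_right, continuousWithinAt_Iic_gSet_iff]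
  exact and_iff_left (continuousWithinAt_Ici_gSet hC t)

end Continuity

namespace FMconv

variable {Cn : ℕ → Set ℝ} {C : Set ℝ} {t : ℝ}

lemma eventually_lt_gSet (hFM : FMconv Cn C) {c : EReal} (hc : c < gSetLT t C) :
    ∀ᶠ n in atTop, c < gSet t (Cn n) := by
  obtain ⟨r, hr, hrt, hcr⟩ := exists_lt_of_lt_gSetLT hc
  obtain ⟨m, hcm, hmr⟩ := EReal.exists_between_coe_real hcr
  filter_upwards [hFM.1 (Ioo m t) isOpen_Ioo ⟨r, ⟨EReal.coe_lt_coe_iff.1 hmr, hrt⟩, hr⟩]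
    with n ⟨y, ⟨hmy, hyt⟩, hy⟩
  exact hcm.trans ((EReal.coe_lt_coe hmy).trans_le (coe_le_gSet hy hyt.le))

lemma eventually_gSet_lt (hFM : FMconv Cn C) {c : EReal} (hc : gSet t C < c) :
    ∀ᶠ n in atTop, gSet t (Cn n) < c := by
  obtain ⟨b, hb, hbc⟩ := EReal.exists_between_coe_real hc
  have hK : Icc b t ∩ C = ∅ := eq_empty_of_forall_notMem fun x ⟨⟨hbx, hxt⟩, hx⟩ =>
    (hb.trans_le ((EReal.coe_le_coe hbx).trans (coe_le_gSet hx hxt))).false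
  filter_upwards [hFM.2 (Icc b t) isCompact_Icc hK] with n hn
  refine (gSet_le fun y hy hyt => ?_).trans_lt hbc
  by_contra! hby
  exact hn.subset ⟨⟨(EReal.coe_lt_coe_iff.1 hby).le, hyt⟩, hy⟩

lemma tendsto_gSet (hFM : FMconv Cn C) (h : gSetLT t C = gSet t C) :
    Tendsto (fun n => gSet t (Cn n)) atTop (𝓝 (gSet t C)) :=
  tendsto_order.2 ⟨fun _ hc => hFM.eventually_lt_gSet (h ▸ hc), fun _ => hFM.eventually_gSet_lt⟩

lemma image_add (hC : IsClosed C) {a : ℕ → ℝ} (ha : Tendsto a atTop (𝓝 0)) :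
    FMconv (fun n => (· + a n) '' C) C := by
  refine ⟨fun G hG ⟨x, hxG, hx⟩ => ?_, fun K hK hKC => ?_⟩
  · have hxa : Tendsto (fun n => x + a n) atTop (𝓝 x) := by
      simpa using tendsto_const_nhds.add ha
    filter_upwards [hxa.eventually (hG.mem_nhds hxG)] with n hn using ⟨_, hn, x, hx, rfl⟩
  · obtain ⟨δ, hδ, hKδ⟩ := hK.exists_thickening_subset_open hC.isOpen_compl
      fun x hxK hx => hKC.subset ⟨hxK, hx⟩
    filter_upwards [ha.eventually (Metric.ball_mem_nhds 0 hδ)] with n hn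
    refine eq_empty_of_forall_notMem ?_
    rintro _ ⟨hxK, x, hx, rfl⟩
    refine hKδ (Metric.mem_thickening_iff.2 ⟨x + a n, hxK, ?_⟩) hx
    simpa [Real.dist_eq] using hn

end FMconv

section Translation

variable {C : Set ℝ} {t : ℝ}

lemma gSet_image_add_le {a : ℝ} (ha : 0 < a) : gSet t ((· + a) '' C) ≤ gSetLT t C + a := by
  refine gSet_le ?_
  rintro _ ⟨x, hx, rfl⟩ hxt
  rw [EReal.coe_add]
  exact add_le_add_left (coe_le_gSetLT hx (by linarith)) _

lemma tendsto_add_coe_of_tendsto_zero {a : ℕ → ℝ} (ha : Tendsto a atTop (𝓝 0)) (x : EReal) :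
    Tendsto (fun n => x + a n) atTop (𝓝 x) := by
  have hadd := (EReal.continuousAt_add (p := (x, 0)) (by simp) (by simp)).tendsto
  simpa [Function.comp_def] using
    hadd.comp (tendsto_const_nhds.prodMk_nhds (EReal.tendsto_coe.2 ha))

end Translation

/-- For a closed `C ⊆ ℝ` and `t ∈ ℝ`, the map `g_t` on closed sets (with the Fell–Matheron
topology, expressed via sequential convergence) is continuous at `C` if and only if the
function `s ↦ g_s(C)` is continuous at `s = t`. -/
theorem gt_continuousAt_iff (C : Set ℝ) (hC : IsClosed C) (t : ℝ) :
    (∀ Cn : ℕ → Set ℝ, (∀ n, IsClosed (Cn n)) → FMconv Cn C →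
        Tendsto (fun n => gSet t (Cn n)) atTop (nhds (gSet t C)))
      ↔ ContinuousAt (fun s => gSet s C) t := by
  rw [continuousAt_gSet_iff hC]
  refine ⟨fun h => (gSetLT_le_gSet C t).antisymm ?_, fun h Cn _ hFM => hFM.tendsto_gSet h⟩
  set a : ℕ → ℝ := fun n => 1 / (n + 1)
  have ha : Tendsto a atTop (𝓝 0) := tendsto_one_div_add_atTop_nhds_zero_nat
  have hclosed : ∀ n, IsClosed ((· + a n) '' C) := fun n =>
    (Homeomorph.addRight (a n)).isClosedMap C hC
  exact le_of_tendsto_of_tendsto' (h _ hclosed (FMconv.image_add hC ha))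
    (tendsto_add_coe_of_tendsto_zero ha _) fun n => gSet_image_add_le (by positivity)
end

section
/- For each t ∈ ℝ, the map g_t: 𝒞 → ℝ̄ defined by g_t(C) := sup{x ∈ C : x ≤ t} is Borel measurable with respect to the Borel σ-algebra generated by the Fell–Matheron topology on the space 𝒞 of closed subsets of ℝ. -/
open scoped Real

/-- The space of all closed subsets of `ℝ`. -/
def ClosedSubsets : Type := {S : Set ℝ // IsClosed S}

/-- The Fell–Matheron distance on closed subsets of `ℝ` (Hausdorff distance between the
images under `arctan`, augmented by `{±π/2}`, in the compactification `[−π/2, π/2]`). -/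
noncomputable def FMdist (C C' : ClosedSubsets) : ℝ :=
  Metric.hausdorffDist
    (Real.arctan '' C.1 ∪ {-(π / 2), π / 2})
    (Real.arctan '' C'.1 ∪ {-(π / 2), π / 2})

/-- The Fell–Matheron topology on closed subsets of `ℝ`: the topology generated by the
open balls of the Fell–Matheron metric. -/
noncomputable def fellTop : TopologicalSpace ClosedSubsets :=
  TopologicalSpace.generateFrom
    {s : Set ClosedSubsets | ∃ C ε, 0 < ε ∧ s = {D | FMdist C D < ε}}

open Set Metric Real

/-- The augmented arctan image of a closed set. -/
noncomputable def augImg (C : ClosedSubsets) : Set ℝ :=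
  Real.arctan '' C.1 ∪ {-(π / 2), π / 2}

lemma augImg_subset (C : ClosedSubsets) : augImg C ⊆ Set.Icc (-(π / 2)) (π / 2) := by
  rintro y (⟨x, -, rfl⟩ | rfl | rfl)
  · exact ⟨(Real.neg_pi_div_two_lt_arctan x).le, (Real.arctan_lt_pi_div_two x).le⟩
  · constructor <;> nlinarith [Real.pi_pos]
  · constructor <;> nlinarith [Real.pi_pos]

lemma augImg_nonempty (C : ClosedSubsets) : (augImg C).Nonempty :=
  ⟨π / 2, Or.inr (by simp)⟩

lemma augImg_bounded (C : ClosedSubsets) : Bornology.IsBounded (augImg C) :=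
  (Metric.isBounded_Icc _ _).subset (augImg_subset C)

lemma FMdist_eq (C D : ClosedSubsets) :
    FMdist C D = Metric.hausdorffDist (augImg C) (augImg D) := rfl

/-- `arctan` image of an open set is open. -/
lemma isOpen_arctan_image {U : Set ℝ} (hU : IsOpen U) : IsOpen (Real.arctan '' U) := by
  have h : Real.arctan '' U = Set.Ioo (-(π / 2)) (π / 2) ∩ Real.tan ⁻¹' U := by
    ext y
    constructor
    · rintro ⟨x, hx, rfl⟩
      exact ⟨Real.arctan_mem_Ioo x, by simpa [Real.tan_arctan] using hx⟩
    · rintro ⟨hy, hty⟩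
      exact ⟨Real.tan y, hty, Real.arctan_tan hy.1 hy.2⟩
  rw [h]
  exact (Real.continuousOn_tan.mono
    (fun x hx => (Real.cos_pos_of_mem_Ioo hx).ne')).isOpen_inter_preimage isOpen_Ioo hU

/-- The "hitting" sets of open sets are open in the Fell–Matheron topology. -/
lemma isOpen_hit {U : Set ℝ} (hU : IsOpen U) :
    @IsOpen ClosedSubsets fellTop {C : ClosedSubsets | (C.1 ∩ U).Nonempty} := by
  letI := fellTop
  rw [isOpen_iff_forall_mem_open]
  rintro C ⟨x, hxC, hxU⟩
  have hV : IsOpen (Real.arctan '' U) := isOpen_arctan_image hU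
  obtain ⟨ε, hε, hball⟩ := Metric.isOpen_iff.1 hV (Real.arctan x) ⟨x, hxU, rfl⟩
  refine ⟨{D | FMdist C D < ε}, ?_, ?_, ?_⟩
  · intro D hD
    have hmem : Real.arctan x ∈ augImg C := Or.inl ⟨x, hxC, rfl⟩
    obtain ⟨y, hy, hdist⟩ := Metric.exists_dist_lt_of_hausdorffDist_lt hmem hD
      (Metric.hausdorffEdist_ne_top_of_nonempty_of_bounded (augImg_nonempty C)
        (augImg_nonempty D) (augImg_bounded C) (augImg_bounded D))
    have hyV : y ∈ Real.arctan '' U := hball (by simpa [Metric.mem_ball, dist_comm] using hdist)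
    obtain ⟨u, huU, rfl⟩ := hyV
    rcases hy with ⟨d, hdD, hd⟩ | hy
    · have : d = u := Real.arctan_injective hd
      exact ⟨u, this ▸ hdD, huU⟩
    · exfalso
      rcases hy with h | h
      · have := Real.neg_pi_div_two_lt_arctan u
        rw [h] at this; exact lt_irrefl _ this
      · simp only [Set.mem_singleton_iff] at h
        have := Real.arctan_lt_pi_div_two u
        rw [h] at this; exact lt_irrefl _ this
  · exact TopologicalSpace.isOpen_generateFrom_of_mem ⟨C, ε, hε, rfl⟩
  · simpa [Set.mem_setOf_eq, FMdist_eq, Metric.hausdorffDist_self_zero] using hε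

/-- Key decomposition: a closed set contains a point `≤ t` in `L` iff it hits
`L ∩ (-∞, t + 1/(n+1))` for every `n`. -/
lemma key_eq (t : ℝ) {L : Set ℝ} (hL : IsOpen L) (htL : t ∈ L) :
    {C : ClosedSubsets | ∃ r ∈ C.1, r ≤ t ∧ r ∈ L} =
      ⋂ n : ℕ, {C : ClosedSubsets | (C.1 ∩ (L ∩ Set.Iio (t + 1 / (n + 1)))).Nonempty} := by
  ext C
  simp only [Set.mem_setOf_eq, Set.mem_iInter]
  constructor
  · rintro ⟨r, hrC, hrt, hrL⟩ n
    refine ⟨r, hrC, hrL, ?_⟩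
    have : (0 : ℝ) < 1 / (n + 1) := by positivity
    simp only [Set.mem_Iio]; linarith
  · intro h
    by_cases hx : ∃ r ∈ C.1, r ≤ t ∧ r ∈ L
    · exact hx
    · have htC : t ∈ C.1 := by
        rw [← C.2.closure_eq]
        rw [Metric.mem_closure_iff]
        intro ε hε
        obtain ⟨n, hn⟩ := exists_nat_one_div_lt hε
        obtain ⟨x, hxC, hxL, hxlt⟩ := h n
        have hxt : t < x := by
          by_contra hc
          push_neg at hc
          exact hx ⟨x, hxC, hc, hxL⟩
        refine ⟨x, hxC, ?_⟩
        rw [Real.dist_eq, abs_of_neg (by linarith)]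
        simp only [Set.mem_Iio] at hxlt
        linarith
      exact ⟨t, htC, le_refl t, htL⟩

lemma hit_measurableSet {U : Set ℝ} (hU : IsOpen U) :
    @MeasurableSet ClosedSubsets (@borel ClosedSubsets fellTop)
      {C : ClosedSubsets | (C.1 ∩ U).Nonempty} :=
  MeasurableSpace.measurableSet_generateFrom (isOpen_hit hU)

/-- For each `t ∈ ℝ`, the map `C ↦ g_t(C)` from the space of closed subsets of `ℝ`
(with the Borel σ-algebra of the Fell–Matheron topology) to `ℝ̄` is Borel measurable. -/
theorem gt_measurable (t : ℝ) :
    @Measurable ClosedSubsets EReal (@borel ClosedSubsets fellTop) _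
      (fun C => gSet t C.1) := by
  letI : MeasurableSpace ClosedSubsets := @borel ClosedSubsets fellTop
  apply measurable_of_Ioi
  intro a
  have hpre : (fun C : ClosedSubsets => gSet t C.1) ⁻¹' Set.Ioi a =
      {C : ClosedSubsets | ∃ r ∈ C.1, r ≤ t ∧ a < (r : EReal)} := by
    ext C
    simp only [Set.mem_preimage, Set.mem_Ioi, Set.mem_setOf_eq, gSet, lt_sSup_iff]
    constructor
    · rintro ⟨b, ⟨r, hrC, hrt, rfl⟩, hlt⟩
      exact ⟨r, hrC, hrt, hlt⟩
    · rintro ⟨r, hrC, hrt, hlt⟩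
      exact ⟨(r : EReal), ⟨r, hrC, hrt, rfl⟩, hlt⟩
  rw [hpre]
  induction a using EReal.rec with
  | bot =>
    have : {C : ClosedSubsets | ∃ r ∈ C.1, r ≤ t ∧ (⊥ : EReal) < (r : EReal)} =
        {C : ClosedSubsets | ∃ r ∈ C.1, r ≤ t ∧ r ∈ (Set.univ : Set ℝ)} := by
      ext C
      simp [EReal.bot_lt_coe]
    rw [this, key_eq t isOpen_univ (Set.mem_univ t)]
    exact MeasurableSet.iInter fun n =>
      hit_measurableSet (isOpen_univ.inter isOpen_Iio)
  | coe b =>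
    by_cases hbt : b < t
    · have : {C : ClosedSubsets | ∃ r ∈ C.1, r ≤ t ∧ (b : EReal) < (r : EReal)} =
          {C : ClosedSubsets | ∃ r ∈ C.1, r ≤ t ∧ r ∈ Set.Ioi b} := by
        ext C
        simp [EReal.coe_lt_coe_iff, Set.mem_Ioi]
      rw [this, key_eq t isOpen_Ioi hbt]
      exact MeasurableSet.iInter fun n =>
        hit_measurableSet (isOpen_Ioi.inter isOpen_Iio)
    · have : {C : ClosedSubsets | ∃ r ∈ C.1, r ≤ t ∧ (b : EReal) < (r : EReal)} = ∅ := by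
        ext C
        simp only [Set.mem_setOf_eq, Set.mem_empty_iff_false, iff_false]
        rintro ⟨r, -, hrt, hlt⟩
        rw [EReal.coe_lt_coe_iff] at hlt
        push_neg at hbt
        linarith
      rw [this]
      exact MeasurableSet.empty
  | top =>
    have : {C : ClosedSubsets | ∃ r ∈ C.1, r ≤ t ∧ (⊤ : EReal) < (r : EReal)} = ∅ := by
      ext C
      simp only [Set.mem_setOf_eq, Set.mem_empty_iff_false, iff_false]
      rintro ⟨r, -, -, hlt⟩
      exact (EReal.coe_lt_top r).not_gt hlt
    rw [this]
    exact MeasurableSet.empty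
end

section
/- Let ω be a real random variable with E[e^{tω}] < ∞ for |t| ≤ t₀. For every k ∈ ℕ there is a constant C(k) such that, for all β > 0 small enough and h with |h| ≤ β², E[(e^{βω − Λ(β) + h} − 1)^{2k}] ≤ C(k) β^{2k}, where Λ(β) := log E[e^{βω}]. -/
open MeasureTheory

/-- The log moment generating function `Λ(t) = log E[e^{tω}]`. -/
noncomputable def cgf' {Ω : Type*} [MeasurableSpace Ω] (μ : Measure Ω) (w : Ω → ℝ)
    (t : ℝ) : ℝ :=
  Real.log (∫ x, Real.exp (t * w x) ∂μ)

set_option maxHeartbeats 1000000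

lemma aux_pow_le_exp (n : ℕ) (u : ℝ) (hu : 0 ≤ u) : u ^ n ≤ (Nat.factorial n : ℝ) * Real.exp u := by
  have h := Real.sum_le_exp_of_nonneg hu (n + 1)
  have h2 : u ^ n / (Nat.factorial n : ℝ) ≤ ∑ i ∈ Finset.range (n+1), u ^ i / (i.factorial : ℝ) := by
    exact Finset.single_le_sum (f := fun i => u ^ i / (i.factorial : ℝ))
      (fun i _ => by positivity) (Finset.self_mem_range_succ n)
  have hn : (0:ℝ) < (Nat.factorial n : ℝ) := by positivity
  rw [mul_comm]
  exact (div_le_iff₀ hn).mp (h2.trans h)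

lemma aux_abs_exp_sub_one (y : ℝ) : |Real.exp y - 1| ≤ |y| * Real.exp |y| := by
  rcases le_or_gt 0 y with hy | hy
  · rw [abs_of_nonneg (by linarith [Real.one_le_exp hy]), abs_of_nonneg hy]
    have h1 : (-y) + 1 ≤ Real.exp (-y) := Real.add_one_le_exp (-y)
    have h2 : Real.exp (-y) * Real.exp y = 1 := by rw [← Real.exp_add]; simp
    nlinarith [Real.exp_pos y]
  · rw [abs_of_nonpos (by linarith [Real.exp_lt_one_iff.mpr hy]), abs_of_neg hy]
    have h1 : y + 1 ≤ Real.exp y := Real.add_one_le_exp y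
    nlinarith [Real.one_le_exp (le_of_lt (neg_pos.mpr hy)), Real.exp_pos (-y)]

lemma aux_exp_abs_le (u : ℝ) : Real.exp |u| ≤ Real.exp u + Real.exp (-u) := by
  rcases abs_cases u with ⟨h, _⟩ | ⟨h, _⟩ <;> rw [h] <;>
    nlinarith [Real.exp_pos u, Real.exp_pos (-u)]

lemma aux_add_pow_le (a b : ℝ) (ha : 0 ≤ a) (hb : 0 ≤ b) (n : ℕ) :
    (a + b) ^ n ≤ 2 ^ n * (a ^ n + b ^ n) := by
  have h1 : (a + b) ^ n ≤ (2 * max a b) ^ n := by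
    apply pow_le_pow_left₀ (by linarith)
    rcases max_cases a b with ⟨h,_⟩|⟨h,_⟩ <;> rw [h] <;> linarith
  have h2 : (2 * max a b) ^ n = 2 ^ n * (max a b) ^ n := mul_pow 2 _ n
  have h3 : (max a b) ^ n ≤ a ^ n + b ^ n := by
    rcases max_cases a b with ⟨h,_⟩|⟨h,_⟩ <;> rw [h] <;>
      nlinarith [pow_nonneg ha n, pow_nonneg hb n]
  calc (a+b)^n ≤ 2 ^ n * (max a b) ^ n := h2 ▸ h1
    _ ≤ 2 ^ n * (a ^ n + b ^ n) := by nlinarith [pow_pos (by norm_num : (0:ℝ) < 2) n]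

lemma aux_even_pow_eq_abs (a : ℝ) (n : ℕ) : a ^ (2 * n) = |a| ^ (2 * n) := by
  rw [← abs_pow, abs_of_nonneg ((even_two_mul n).pow_nonneg a)]

/-- Let `ω` have finite exponential moments for `|t| ≤ t₀`. For every `k ∈ ℕ` there is a
constant `C(k)` such that, for all `β > 0` small enough and `|h| ≤ β²`,
`E[(e^{βω − Λ(β) + h} − 1)^{2k}] ≤ C(k) β^{2k}`. -/
theorem xi_even_moment_bound {Ω : Type*} [MeasurableSpace Ω] (μ : Measure Ω)
    [IsProbabilityMeasure μ] (w : Ω → ℝ) (t₀ : ℝ) (ht₀ : 0 < t₀)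
    (hmgf : ∀ t : ℝ, |t| ≤ t₀ → Integrable (fun x => Real.exp (t * w x)) μ)
    (k : ℕ) (hk : 1 ≤ k) :
    ∃ C > (0 : ℝ), ∃ β₀ > (0 : ℝ), ∀ β h : ℝ, 0 < β → β ≤ β₀ → |h| ≤ β ^ 2 →
      Integrable (fun x => (Real.exp (β * w x - cgf' μ w β + h) - 1) ^ (2 * k)) μ ∧
      (∫ x, (Real.exp (β * w x - cgf' μ w β + h) - 1) ^ (2 * k) ∂μ) ≤ C * β ^ (2 * k) := by
  have hkpos : (0:ℝ) < (k:ℝ) := by exact_mod_cast hk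
  have hexpP := hmgf t₀ (by rw [abs_of_pos ht₀])
  have hexpN := hmgf (-t₀) (by rw [abs_neg, abs_of_pos ht₀])
  set G : Ω → ℝ := fun x => Real.exp (t₀ * w x) + Real.exp (-(t₀ * w x))
    with hGdef
  have hGint : Integrable G μ := by
    apply hexpP.add
    simpa [neg_mul] using hexpN
  have hGkey : ∀ x, Real.exp (t₀ * |w x|) ≤ G x := by
    intro x
    have h1 : t₀ * |w x| = |t₀ * w x| := by rw [abs_mul, abs_of_pos ht₀]
    rw [h1]
    exact aux_exp_abs_le (t₀ * w x)
  have hG0 : ∀ x, 0 ≤ G x := fun x => by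
    rw [hGdef]; positivity
  clear_value G
  -- measurability of w
  have hwm : AEMeasurable w μ := by
    have h1 : AEMeasurable (fun x => Real.exp (t₀ * w x)) μ := hexpP.aemeasurable
    have h2 : AEMeasurable (fun x => Real.log (Real.exp (t₀ * w x)) / t₀) μ :=
      (Real.measurable_log.comp_aemeasurable h1).div_const t₀
    have h3 : (fun x => Real.log (Real.exp (t₀ * w x)) / t₀) = w := by
      funext x; rw [Real.log_exp]; field_simp
    rwa [h3] at h2
  -- integrability of w
  have hwb : ∀ x, |w x| ≤ t₀⁻¹ * G x := by
    intro x
    have h1 : t₀ * |w x| ≤ Real.exp (t₀ * |w x|) := by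
      linarith [Real.add_one_le_exp (t₀ * |w x|)]
    have h2 : t₀ * |w x| ≤ G x := h1.trans (hGkey x)
    calc |w x| = t₀⁻¹ * (t₀ * |w x|) := by field_simp
      _ ≤ t₀⁻¹ * G x := by
          exact mul_le_mul_of_nonneg_left h2 (inv_nonneg.mpr ht₀.le)
  have hwint : Integrable w μ := by
    apply (hGint.const_mul t₀⁻¹).mono hwm.aestronglyMeasurable
    filter_upwards with x
    rw [Real.norm_eq_abs, Real.norm_eq_abs]
    refine (hwb x).trans ?_
    exact le_abs_self _
  -- constants
  set M : ℝ := ∫ x, |w x| ∂μ with hMdef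
  have hM0 : 0 ≤ M := integral_nonneg fun x => abs_nonneg _
  clear_value M
  set IG : ℝ := ∫ x, G x ∂μ with hIGdef
  have hIG0 : 0 ≤ IG := integral_nonneg hG0
  clear_value IG
  set K₂ : ℝ := (2 / t₀) * IG with hK₂def
  have hK₂0 : 0 ≤ K₂ := by rw [hK₂def]; positivity
  clear_value K₂
  set K₁ : ℝ := 2 * M + K₂ + 1 with hK₁def
  have hK₁0 : 0 < K₁ := by rw [hK₁def]; positivity
  clear_value K₁
  set K : ℝ := K₁ + 1 with hKdef
  have hK0 : 0 < K := by rw [hKdef]; positivity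
  clear_value K
  set β₀ : ℝ := min (min 1 (t₀ / (8 * (k:ℝ)))) (min (1 / (2 * (M + 1))) (t₀ / 2))
    with hβ₀def
  have hβ₀pos : 0 < β₀ := by
    apply lt_min (lt_min one_pos (by positivity)) (lt_min (by positivity) (by positivity))
  have hβ₀1 : β₀ ≤ 1 := le_trans (min_le_left _ _) (min_le_left _ _)
  have hβ₀k : β₀ ≤ t₀ / (8 * (k:ℝ)) := le_trans (min_le_left _ _) (min_le_right _ _)
  have hβ₀M : β₀ ≤ 1 / (2 * (M + 1)) := le_trans (min_le_right _ _) (min_le_left _ _)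
  have hβ₀t : β₀ ≤ t₀ / 2 := le_trans (min_le_right _ _) (min_le_right _ _)
  clear_value β₀
  -- bound on the cgf
  have hLam : ∀ β : ℝ, 0 < β → β ≤ β₀ → |cgf' μ w β| ≤ K₁ * β := by
    intro β hb hbb
    have hβt : |β| ≤ t₀ := by
      rw [abs_of_pos hb]; linarith
    have hint : Integrable (fun x => Real.exp (β * w x)) μ := hmgf β hβt
    set I : ℝ := ∫ x, Real.exp (β * w x) ∂μ with hIdef
    have hβM : β * M ≤ 1 / 2 := by
      have h1 : β ≤ 1 / (2 * (M + 1)) := hbb.trans hβ₀M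
      have h2 : 0 < 2 * (M + 1) := by positivity
      rw [le_div_iff₀ h2] at h1
      nlinarith
    -- lower bound on I
    have hlow : 1 - β * M ≤ I := by
      have hpt : ∀ x, 1 + β * w x ≤ Real.exp (β * w x) := fun x => by
        linarith [Real.add_one_le_exp (β * w x)]
      have h1 : (∫ x, (1 + β * w x) ∂μ) ≤ I :=
        integral_mono ((integrable_const 1).add (hwint.const_mul β)) hint hpt
      have h2 : (∫ x, (1 + β * w x) ∂μ) = 1 + β * ∫ x, w x ∂μ := by
        rw [integral_add (integrable_const 1) (hwint.const_mul β), integral_const,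
          integral_const_mul]
        simp
      have h3 : |∫ x, w x ∂μ| ≤ M := by
        rw [hMdef]
        calc |∫ x, w x ∂μ| = ‖∫ x, w x ∂μ‖ := (Real.norm_eq_abs _).symm
          _ ≤ ∫ x, ‖w x‖ ∂μ := norm_integral_le_integral_norm w
          _ = ∫ x, |w x| ∂μ := by simp [Real.norm_eq_abs]
      have h4 : -M ≤ ∫ x, w x ∂μ := by
        rcases abs_le.mp h3 with ⟨h4, _⟩; linarith
      nlinarith
    have hIpos : 0 < I := by linarith
    -- upper bound on I
    have hup : I ≤ 1 + β * ((2 / t₀) * IG) := by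
      have hpt : ∀ x, Real.exp (β * w x) ≤ 1 + β * ((2 / t₀) * G x) := by
        intro x
        have h1 : Real.exp (β * w x) - 1 ≤ |β * w x| * Real.exp |β * w x| := by
          calc Real.exp (β * w x) - 1 ≤ |Real.exp (β * w x) - 1| := le_abs_self _
            _ ≤ |β * w x| * Real.exp |β * w x| := aux_abs_exp_sub_one _
        have h2 : |β * w x| = β * |w x| := by rw [abs_mul, abs_of_pos hb]
        have h3 : |w x| ≤ (2 / t₀) * Real.exp ((t₀/2) * |w x|) := by
          have h4 := aux_pow_le_exp 1 ((t₀/2) * |w x|) (by positivity)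
          simp only [pow_one, Nat.factorial_one, Nat.cast_one, one_mul] at h4
          calc |w x| = (2 / t₀) * ((t₀/2) * |w x|) := by field_simp
            _ ≤ (2 / t₀) * Real.exp ((t₀/2) * |w x|) := by
                exact mul_le_mul_of_nonneg_left h4 (by positivity)
        have h5 : Real.exp ((t₀/2) * |w x|) * Real.exp (β * |w x|) ≤
            Real.exp (t₀ * |w x|) := by
          rw [← Real.exp_add]
          apply Real.exp_le_exp.mpr
          have hβ2 : β ≤ t₀ / 2 := hbb.trans hβ₀t
          nlinarith [abs_nonneg (w x)]
        have h6 : |β * w x| * Real.exp |β * w x| ≤ β * ((2 / t₀) * G x) := by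
          rw [h2]
          calc β * |w x| * Real.exp (β * |w x|)
              ≤ β * ((2 / t₀) * Real.exp ((t₀/2) * |w x|)) * Real.exp (β * |w x|) := by
                apply mul_le_mul_of_nonneg_right _ (Real.exp_pos _).le
                exact mul_le_mul_of_nonneg_left h3 hb.le
            _ = β * (2 / t₀) * (Real.exp ((t₀/2) * |w x|) * Real.exp (β * |w x|)) := by ring
            _ ≤ β * (2 / t₀) * Real.exp (t₀ * |w x|) := by
                apply mul_le_mul_of_nonneg_left h5 (by positivity)
            _ ≤ β * (2 / t₀) * G x := by
                apply mul_le_mul_of_nonneg_left (hGkey x) (by positivity)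
            _ = β * ((2 / t₀) * G x) := by ring
        linarith
      have h1 : I ≤ ∫ x, (1 + β * ((2 / t₀) * G x)) ∂μ :=
        integral_mono hint ((integrable_const 1).add ((hGint.const_mul (2/t₀)).const_mul β)) hpt
      have h2 : (∫ x, (1 + β * ((2 / t₀) * G x)) ∂μ) = 1 + β * ((2 / t₀) * IG) := by
        rw [hIGdef, integral_add (integrable_const 1)
          (((hGint.const_mul (2/t₀)).const_mul β)), integral_const, integral_const_mul,
          integral_const_mul]
        simp
      linarith
    -- combine
    rw [abs_le]
    constructor
    · -- lower bound on log I
      have h1 : Real.log I⁻¹ ≤ I⁻¹ - 1 := Real.log_le_sub_one_of_pos (by positivity)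
      rw [Real.log_inv] at h1
      have h2 : I⁻¹ ≤ 1 + 2 * (β * M) := by
        have h3 : I * (1 + 2 * (β * M)) ≥ 1 := by
          nlinarith [mul_nonneg hb.le hM0]
        have h4 : 0 < 1 + 2 * (β * M) := by nlinarith
        rw [inv_le_iff_one_le_mul₀'] <;> nlinarith
      have : -(K₁ * β) ≤ -(2 * M * β) := by nlinarith
      have hlog : -(I⁻¹ - 1) ≤ Real.log I := by linarith
      show -(K₁ * β) ≤ cgf' μ w β
      rw [cgf', ← hIdef]
      nlinarith
    · show cgf' μ w β ≤ K₁ * β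
      rw [cgf', ← hIdef]
      have h1 : Real.log I ≤ I - 1 := Real.log_le_sub_one_of_pos hIpos
      have h2 : I - 1 ≤ β * K₂ := by rw [hK₂def]; linarith
      nlinarith
  -- more constants
  set Ck : ℝ := ((2*k).factorial : ℝ) * ((t₀/4)⁻¹)^(2*k) with hCkdef
  have hCk0 : 0 ≤ Ck := by rw [hCkdef]; positivity
  clear_value Ck
  set E₀ : ℝ := Real.exp (2 * (k:ℝ) * K) with hE₀def
  have hE₀0 : 0 < E₀ := by rw [hE₀def]; positivity
  clear_value E₀
  set D : ℝ := 2^(2*k) * (Ck + K^(2*k)) * E₀ with hDdef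
  have hD0 : 0 < D := by
    rw [hDdef]
    exact mul_pos (mul_pos (by positivity)
      (by nlinarith [pow_pos hK0 (2*k)] : (0:ℝ) < Ck + K^(2*k))) hE₀0
  clear_value D
  set C : ℝ := D * IG + 1 with hCdef
  have hC0 : 0 < C := by rw [hCdef]; nlinarith [mul_nonneg hD0.le hIG0]
  clear_value C
  -- pointwise bound
  have hpt : ∀ β h : ℝ, 0 < β → β ≤ β₀ → |h| ≤ β ^ 2 → ∀ x,
      (Real.exp (β * w x - cgf' μ w β + h) - 1) ^ (2*k) ≤ β^(2*k) * D * G x := by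
    intro β h hb hbb hh x
    set a : ℝ := w x with hadef
    set c : ℝ := h - cgf' μ w β with hcdef
    set y : ℝ := β * a + c with hydef
    clear_value a c y
    have hy : β * a - cgf' μ w β + h = y := by rw [hydef, hcdef]; ring
    rw [hy]
    have hβ1 : β ≤ 1 := hbb.trans hβ₀1
    have hcb : |c| ≤ K * β := by
      rw [hcdef]
      calc |h - cgf' μ w β| ≤ |h| + |cgf' μ w β| := abs_sub _ _
        _ ≤ β^2 + K₁ * β := add_le_add hh (hLam β hb hbb)
        _ ≤ β + K₁ * β := by nlinarith
        _ = K * β := by rw [hKdef]; ring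
    have hyb : |y| ≤ β * (|a| + K) := by
      rw [hydef]
      calc |β * a + c| ≤ |β * a| + |c| := abs_add_le _ _
        _ = β * |a| + |c| := by rw [abs_mul, abs_of_pos hb]
        _ ≤ β * |a| + K * β := by linarith
        _ = β * (|a| + K) := by ring
    -- step A
    have hA : (Real.exp y - 1)^(2*k) ≤ |y|^(2*k) * Real.exp ((2*(k:ℝ)) * |y|) := by
      rw [aux_even_pow_eq_abs]
      calc |Real.exp y - 1|^(2*k) ≤ (|y| * Real.exp |y|)^(2*k) :=
            pow_le_pow_left₀ (abs_nonneg _) (aux_abs_exp_sub_one y) _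
        _ = |y|^(2*k) * (Real.exp |y|)^(2*k) := mul_pow _ _ _
        _ = |y|^(2*k) * Real.exp ((2*(k:ℝ)) * |y|) := by
            rw [← Real.exp_nat_mul]
            push_cast
            ring_nf
    -- step B : exp bound
    have hB : Real.exp ((2*(k:ℝ)) * |y|) ≤ E₀ * Real.exp ((t₀/4) * |a|) := by
      have h1 : (2*(k:ℝ)) * |y| ≤ (2*(k:ℝ)*β) * |a| + 2*(k:ℝ)*β*K := by
        have := mul_le_mul_of_nonneg_left hyb (by positivity : (0:ℝ) ≤ 2*(k:ℝ))
        nlinarith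
      have h2 : (2*(k:ℝ)*β) * |a| ≤ (t₀/4) * |a| := by
        apply mul_le_mul_of_nonneg_right _ (abs_nonneg a)
        have h3 : β ≤ t₀ / (8 * (k:ℝ)) := hbb.trans hβ₀k
        rw [le_div_iff₀ (by positivity)] at h3
        nlinarith
      have h3 : 2*(k:ℝ)*β*K ≤ 2*(k:ℝ)*K := by
        calc 2*(k:ℝ)*β*K = (2*(k:ℝ)*K)*β := by ring
          _ ≤ (2*(k:ℝ)*K)*1 := mul_le_mul_of_nonneg_left hβ1 (by positivity)
          _ = 2*(k:ℝ)*K := by ring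
      calc Real.exp ((2*(k:ℝ)) * |y|) ≤ Real.exp ((t₀/4) * |a| + 2*(k:ℝ)*K) := by
            apply Real.exp_le_exp.mpr; linarith
        _ = E₀ * Real.exp ((t₀/4) * |a|) := by rw [hE₀def, ← Real.exp_add]; ring_nf
    -- step C : |y|^(2k) bound
    have hCk' : |a|^(2*k) ≤ Ck * Real.exp ((t₀/4) * |a|) := by
      have h1 := aux_pow_le_exp (2*k) ((t₀/4) * |a|) (by positivity)
      have h2 : |a| = (t₀/4)⁻¹ * ((t₀/4) * |a|) := by field_simp
      calc |a|^(2*k) = ((t₀/4)⁻¹)^(2*k) * ((t₀/4) * |a|)^(2*k) := by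
            rw [← mul_pow, ← h2]
        _ ≤ ((t₀/4)⁻¹)^(2*k) * (((2*k).factorial : ℝ) * Real.exp ((t₀/4) * |a|)) := by
            exact mul_le_mul_of_nonneg_left h1 (by positivity)
        _ = Ck * Real.exp ((t₀/4) * |a|) := by rw [hCkdef]; ring
    have hy2 : |y|^(2*k) ≤ β^(2*k) * (2^(2*k) * (Ck + K^(2*k)) * Real.exp ((t₀/4) * |a|)) := by
      have hexp1 : (1:ℝ) ≤ Real.exp ((t₀/4) * |a|) := Real.one_le_exp (by positivity)
      calc |y|^(2*k) ≤ (β * (|a| + K))^(2*k) :=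
            pow_le_pow_left₀ (abs_nonneg _) hyb _
        _ = β^(2*k) * (|a| + K)^(2*k) := mul_pow _ _ _
        _ ≤ β^(2*k) * (2^(2*k) * (|a|^(2*k) + K^(2*k))) := by
            apply mul_le_mul_of_nonneg_left _ (by positivity)
            exact aux_add_pow_le _ _ (abs_nonneg a) hK0.le _
        _ ≤ β^(2*k) * (2^(2*k) * (Ck + K^(2*k)) * Real.exp ((t₀/4) * |a|)) := by
            apply mul_le_mul_of_nonneg_left _ (by positivity)
            have h3 : K^(2*k) ≤ K^(2*k) * Real.exp ((t₀/4) * |a|) := by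
              nth_rewrite 1 [← mul_one (K^(2*k))]
              exact mul_le_mul_of_nonneg_left hexp1 (pow_nonneg hK0.le _)
            calc (2:ℝ)^(2*k) * (|a|^(2*k) + K^(2*k))
                ≤ 2^(2*k) * (Ck * Real.exp ((t₀/4) * |a|) +
                    K^(2*k) * Real.exp ((t₀/4) * |a|)) := by
                  exact mul_le_mul_of_nonneg_left (add_le_add hCk' h3) (by positivity)
              _ = 2^(2*k) * (Ck + K^(2*k)) * Real.exp ((t₀/4) * |a|) := by ring
    -- combine
    calc (Real.exp y - 1)^(2*k) ≤ |y|^(2*k) * Real.exp ((2*(k:ℝ)) * |y|) := hA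
      _ ≤ (β^(2*k) * (2^(2*k) * (Ck + K^(2*k)) * Real.exp ((t₀/4) * |a|))) *
            (E₀ * Real.exp ((t₀/4) * |a|)) := by
          apply mul_le_mul hy2 hB (Real.exp_pos _).le
          exact mul_nonneg (by positivity)
            (mul_nonneg (mul_nonneg (by positivity) (add_nonneg hCk0 (pow_nonneg hK0.le _)))
              (Real.exp_pos _).le)
      _ = β^(2*k) * D * (Real.exp ((t₀/4) * |a|) * Real.exp ((t₀/4) * |a|)) := by
          rw [hDdef]; ring
      _ = β^(2*k) * D * Real.exp ((t₀/2) * |a|) := by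
          have he : (t₀/4) * |a| + (t₀/4) * |a| = (t₀/2) * |a| := by ring
          rw [← Real.exp_add, he]
      _ ≤ β^(2*k) * D * Real.exp (t₀ * |a|) :=
          mul_le_mul_of_nonneg_left (Real.exp_le_exp.mpr
              (mul_le_mul_of_nonneg_right (by linarith) (abs_nonneg a)))
            (mul_nonneg (pow_nonneg hb.le (2*k)) hD0.le)
      _ ≤ β^(2*k) * D * G x :=
          mul_le_mul_of_nonneg_left (hadef ▸ hGkey x)
            (mul_nonneg (pow_nonneg hb.le (2*k)) hD0.le)
  -- conclude
  refine ⟨C, hC0, β₀, hβ₀pos, fun β h hb hbb hh => ?_⟩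
  have hfm : AEStronglyMeasurable
      (fun x => (Real.exp (β * w x - cgf' μ w β + h) - 1) ^ (2*k)) μ := by
    apply AEMeasurable.aestronglyMeasurable
    apply AEMeasurable.pow_const
    apply AEMeasurable.sub_const
    apply Real.measurable_exp.comp_aemeasurable
    exact ((hwm.const_mul β).sub_const _).add_const _
  have hfb : ∀ x, (Real.exp (β * w x - cgf' μ w β + h) - 1) ^ (2*k)
      ≤ β^(2*k) * D * G x := hpt β h hb hbb hh
  have hf0 : ∀ x, 0 ≤ (Real.exp (β * w x - cgf' μ w β + h) - 1) ^ (2*k) :=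
    fun x => (even_two_mul k).pow_nonneg _
  have hfint : Integrable (fun x => (Real.exp (β * w x - cgf' μ w β + h) - 1) ^ (2*k)) μ := by
    apply (hGint.const_mul (β^(2*k) * D)).mono hfm
    filter_upwards with x
    rw [Real.norm_eq_abs, Real.norm_eq_abs, abs_of_nonneg (hf0 x),
      abs_of_nonneg (mul_nonneg (mul_nonneg (pow_nonneg hb.le _) hD0.le) (hG0 x))]
    exact hfb x
  refine ⟨hfint, ?_⟩
  have h1 : (∫ x, (Real.exp (β * w x - cgf' μ w β + h) - 1) ^ (2*k) ∂μ)
      ≤ ∫ x, β^(2*k) * D * G x ∂μ :=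
    integral_mono hfint (hGint.const_mul _) hfb
  have h2 : (∫ x, β^(2*k) * D * G x ∂μ) = β^(2*k) * D * IG := by
    rw [hIGdef]; exact integral_const_mul _ _
  have h3 : β^(2*k) * D * IG ≤ C * β^(2*k) := by
    rw [hCdef]
    nlinarith [pow_pos hb (2*k), mul_nonneg hD0.le hIG0]
  linarith
end

section
/- Let ζ and ζ̃ be random variables such that the law of ζ̃ has density f with respect to the law of ζ, and let Ξ = F(ζ₁,…,ζ_N) and Ξ̃ = F(ζ̃₁,…,ζ̃_N) be functions of N i.i.d. copies. If E[f(ζ)^{1−l}] ≤ 1 + C/N for some l ∈ ℕ, l ≥ 2, then E[|Ξ|^{l−1}] ≤ e^{C/l} · E[|Ξ̃|^l]^{(l−1)/l}. -/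
open MeasureTheory ENNReal

/-!
Let `g x = ∏ i, f (x i)`, the density of the product law of the `ζ̃ᵢ` with respect to that of
the `ζᵢ`. Writing `|Ξ|^(l-1) = (|Ξ|^(l-1) g^((l-1)/l)) · g^(-(l-1)/l)` and applying Hölder with
exponents `l/(l-1)` and `l` bounds `E|Ξ|^(l-1)` by `E[|Ξ̃|^l]^((l-1)/l) · E[g^(1-l)]^(1/l)`, and by
independence `E[g^(1-l)] = E[f(ζ)^(1-l)]^N ≤ (1 + C/N)^N ≤ e^C`.
-/

section Pi

variable {ι : Type*} [Fintype ι] {α : ι → Type*} [∀ i, MeasurableSpace (α i)]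
  {μ : (i : ι) → Measure (α i)} [∀ i, IsProbabilityMeasure (μ i)]

theorem MeasureTheory.lintegral_pi_prod {f : (i : ι) → α i → ℝ≥0∞}
    (hf : ∀ i, Measurable (f i)) :
    ∫⁻ x, ∏ i, f i (x i) ∂Measure.pi μ = ∏ i, ∫⁻ y, f i y ∂μ i := by
  rw [ProbabilityTheory.lintegral_prod_eq_prod_lintegral_of_indepFun _ _
    (ProbabilityTheory.iIndepFun_pi fun i => (hf i).aemeasurable)
    fun i => (hf i).comp (measurable_pi_apply i)]
  exact Finset.prod_congr rfl fun i _ => (measurePreserving_eval μ i).lintegral_comp (hf i)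

theorem MeasureTheory.Measure.pi_withDensity {f : (i : ι) → α i → ℝ≥0∞}
    (hf : ∀ i, Measurable (f i)) [∀ i, SigmaFinite ((μ i).withDensity (f i))] :
    Measure.pi (fun i => (μ i).withDensity (f i))
      = (Measure.pi μ).withDensity fun x => ∏ i, f i (x i) := by
  refine Measure.pi_eq fun s hs => ?_
  have hindicator : (Set.univ.pi s).indicator (fun x => ∏ i, f i (x i))
      = fun x => ∏ i, (s i).indicator (f i) (x i) := by
    classical
    funext x
    simp [Set.indicator_apply, Finset.prod_ite_zero]
  rw [withDensity_apply _ (.univ_pi hs), ← lintegral_indicator (.univ_pi hs), hindicator,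
    lintegral_pi_prod fun i => (hf i).indicator (hs i)]
  exact Finset.prod_congr rfl fun i _ => by
    rw [withDensity_apply _ (hs i), lintegral_indicator (hs i)]

theorem MeasureTheory.lintegral_prod_rpow_pi {β : Type*} [MeasurableSpace β] {ν : Measure β}
    [IsProbabilityMeasure ν] {f : β → ℝ≥0∞} (hf : Measurable f) (hf_top : ∀ᵐ y ∂ν, f y ≠ ∞)
    (r : ℝ) :
    ∫⁻ x, (∏ i, f (x i)) ^ r ∂Measure.pi (fun _ : ι => ν) = (∫⁻ y, f y ^ r ∂ν) ^ Fintype.card ι :=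
  calc ∫⁻ x, (∏ i, f (x i)) ^ r ∂Measure.pi (fun _ : ι => ν)
      = ∫⁻ x, ∏ i, f (x i) ^ r ∂Measure.pi (fun _ : ι => ν) := by
        refine lintegral_congr_ae ?_
        filter_upwards [Measure.ae_pi_le_pi (Filter.eventually_pi fun _ => hf_top)] with x hx
        exact (ENNReal.prod_rpow_of_ne_top (fun i _ => hx i) r).symm
    _ = (∫⁻ y, f y ^ r ∂ν) ^ Fintype.card ι := by
        rw [lintegral_pi_prod fun _ => hf.pow_const r, Finset.prod_const, Finset.card_univ]

end Pi

section ChangeOfMeasure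

variable {α : Type*} [MeasurableSpace α] {μ : Measure α}

theorem MeasureTheory.ae_ne_zero_of_lintegral_rpow_ne_top {f : α → ℝ≥0∞}
    (hf : AEMeasurable f μ) {r : ℝ} (hr : r < 0) (h : ∫⁻ x, f x ^ r ∂μ ≠ ∞) :
    ∀ᵐ x ∂μ, f x ≠ 0 := by
  filter_upwards [ae_lt_top' (hf.pow_const r) h] with x hx hx₀
  simp [hx₀, hr] at hx

theorem MeasureTheory.ae_ne_top_of_isFiniteMeasure_withDensity {f : α → ℝ≥0∞}
    (hf : AEMeasurable f μ) [IsFiniteMeasure (μ.withDensity f)] :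
    ∀ᵐ x ∂μ, f x ≠ ∞ := by
  refine (ae_lt_top' hf ?_).mono fun _ => ne_of_lt
  rw [← setLIntegral_univ, ← withDensity_apply f MeasurableSet.univ]
  exact measure_ne_top _ _

theorem MeasureTheory.lintegral_rpow_sub_one_le_withDensity {g : α → ℝ≥0∞} (hg : Measurable g)
    (hg₀ : ∀ᵐ x ∂μ, g x ≠ 0) (hg_top : ∀ᵐ x ∂μ, g x ≠ ∞) {φ : α → ℝ≥0∞} (hφ : Measurable φ)
    {l : ℝ} (hl : 1 < l) :
    ∫⁻ x, φ x ^ (l - 1) ∂μ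
      ≤ (∫⁻ x, φ x ^ l ∂μ.withDensity g) ^ ((l - 1) / l) * (∫⁻ x, g x ^ (1 - l) ∂μ) ^ (1 / l) := by
  have hl₀ : 0 < l := by linarith
  have hl₁ : 0 < l - 1 := by linarith
  set a := (l - 1) / l with ha
  have hpq : Real.HolderConjugate (l / (l - 1)) l :=
    ((Real.holderConjugate_iff_eq_conjExponent hl).2 rfl).symm
  have hfirst (x : α) : (φ x ^ (l - 1) * g x ^ a) ^ (l / (l - 1)) = g x * φ x ^ l := by
    rw [ENNReal.mul_rpow_of_nonneg _ _ (by positivity), ← ENNReal.rpow_mul, ← ENNReal.rpow_mul,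
      show (l - 1) * (l / (l - 1)) = l by field_simp,
      show a * (l / (l - 1)) = 1 by rw [ha]; field_simp, ENNReal.rpow_one, mul_comm]
  have hsecond (x : α) : (g x ^ (-a)) ^ l = g x ^ (1 - l) := by
    rw [← ENNReal.rpow_mul, ha]
    congr 1
    field_simp
    ring
  calc ∫⁻ x, φ x ^ (l - 1) ∂μ
      = ∫⁻ x, (φ x ^ (l - 1) * g x ^ a) * g x ^ (-a) ∂μ := by
        refine lintegral_congr_ae ?_
        filter_upwards [hg₀, hg_top] with x hx₀ hx_top
        rw [mul_assoc, ENNReal.rpow_neg,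
          ENNReal.mul_inv_cancel (by simp [hx₀, hx_top]) (by simp [hx₀, hx_top]), mul_one]
    _ ≤ (∫⁻ x, (φ x ^ (l - 1) * g x ^ a) ^ (l / (l - 1)) ∂μ) ^ (1 / (l / (l - 1)))
          * (∫⁻ x, (g x ^ (-a)) ^ l ∂μ) ^ (1 / l) :=
        ENNReal.lintegral_mul_le_Lp_mul_Lq μ hpq (by fun_prop) (by fun_prop)
    _ = _ := by
        simp_rw [hfirst, hsecond, one_div_div]
        rw [lintegral_withDensity_eq_lintegral_mul _ hg (by fun_prop)]
        rfl

end ChangeOfMeasure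

theorem ENNReal.ofReal_one_add_div_pow_le_exp {C : ℝ} (hC : 0 ≤ C) (N : ℕ) :
    ENNReal.ofReal (1 + C / N) ^ N ≤ ENNReal.ofReal (Real.exp C) := by
  rw [← ENNReal.ofReal_pow (by positivity)]
  refine ENNReal.ofReal_le_ofReal ?_
  simpa [sub_eq_add_neg, neg_div] using
    Real.one_sub_div_pow_le_exp_neg (n := N) (t := -C) (by linarith [N.cast_nonneg (α := ℝ)])

theorem change_of_measure_holder_general {E : Type*} [MeasurableSpace E] (ν : Measure E)
    [IsProbabilityMeasure ν] (f : E → ENNReal) (hf : Measurable f)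
    (hprob : IsProbabilityMeasure (ν.withDensity f))
    (N : ℕ) (F : (Fin N → E) → ℝ) (hF : Measurable F)
    (l : ℕ) (hl : 2 ≤ l) (C : ℝ) (hC : 0 ≤ C)
    (hmom : ∫⁻ x, f x ^ ((1 : ℝ) - l) ∂ν ≤ ENNReal.ofReal (1 + C / N)) :
    ∫⁻ x, ENNReal.ofReal (|F x| ^ ((l : ℝ) - 1)) ∂(Measure.pi fun _ : Fin N => ν)
      ≤ ENNReal.ofReal (Real.exp (C / l)) *
        (∫⁻ x, ENNReal.ofReal (|F x| ^ (l : ℝ))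
            ∂(Measure.pi fun _ : Fin N => ν.withDensity f)) ^ (((l : ℝ) - 1) / l) := by
  have hl₁ : (1 : ℝ) < l := by exact_mod_cast hl
  have hf₀ : ∀ᵐ y ∂ν, f y ≠ 0 := ae_ne_zero_of_lintegral_rpow_ne_top hf.aemeasurable
    (by linarith) (hmom.trans_lt ofReal_lt_top).ne
  have hf_top : ∀ᵐ y ∂ν, f y ≠ ∞ := ae_ne_top_of_isFiniteMeasure_withDensity hf.aemeasurable
  have hfx : ∀ᵐ x ∂Measure.pi fun _ : Fin N => ν, ∀ i, f (x i) ≠ 0 ∧ f (x i) ≠ ∞ :=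
    Measure.ae_pi_le_pi (Filter.eventually_pi fun _ => hf₀.and hf_top)
  have hmoment : ∫⁻ x, (∏ i, f (x i)) ^ ((1 : ℝ) - l) ∂Measure.pi (fun _ : Fin N => ν)
      ≤ ENNReal.ofReal (Real.exp C) := by
    rw [lintegral_prod_rpow_pi hf hf_top, Fintype.card_fin]
    exact (pow_le_pow_left' hmom N).trans (ofReal_one_add_div_pow_le_exp hC N)
  have hholder := lintegral_rpow_sub_one_le_withDensity (g := fun x => ∏ i, f (x i))
    (φ := fun x => ENNReal.ofReal |F x|) (by fun_prop)
    (hfx.mono fun x hx => Finset.prod_ne_zero_iff.2 fun i _ => (hx i).1)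
    (hfx.mono fun x hx => ENNReal.prod_ne_top fun i _ => (hx i).2) (by fun_prop) hl₁
  simp only [ofReal_rpow_of_nonneg (abs_nonneg _) (by linarith : (0 : ℝ) ≤ l - 1),
    ofReal_rpow_of_nonneg (abs_nonneg _) (by linarith : (0 : ℝ) ≤ l)] at hholder
  rw [Measure.pi_withDensity fun _ => hf, mul_comm]
  refine hholder.trans (mul_le_mul_right ?_ _)
  calc _ ≤ ENNReal.ofReal (Real.exp C) ^ (1 / (l : ℝ)) := rpow_le_rpow hmoment (by positivity)
    _ = ENNReal.ofReal (Real.exp (C / l)) := by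
      rw [ofReal_rpow_of_pos (Real.exp_pos C), ← Real.exp_mul, mul_one_div]

/-- Change-of-measure/Hölder step: let the law of `ζ̃` have density `f` with respect to the
law `ν` of `ζ`, and let `Ξ = F(ζ₁,…,ζ_N)`, `Ξ̃ = F(ζ̃₁,…,ζ̃_N)` for `N` i.i.d. copies.
If `E[f(ζ)^{1−l}] ≤ 1 + C/N` for some integer `l ≥ 2`, then
`E[|Ξ|^{l−1}] ≤ e^{C/l} · E[|Ξ̃|^l]^{(l−1)/l}`. -/
theorem change_of_measure_holder {E : Type*} [MeasurableSpace E] (ν : Measure E)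
    [IsProbabilityMeasure ν] (f : E → ENNReal) (hf : Measurable f)
    (hprob : IsProbabilityMeasure (ν.withDensity f))
    (N : ℕ) (hN : 1 ≤ N) (F : (Fin N → E) → ℝ) (hF : Measurable F)
    (l : ℕ) (hl : 2 ≤ l) (C : ℝ) (hC : 0 ≤ C)
    (hmom : ∫⁻ x, f x ^ ((1 : ℝ) - l) ∂ν ≤ ENNReal.ofReal (1 + C / N)) :
    ∫⁻ x, ENNReal.ofReal (|F x| ^ ((l : ℝ) - 1)) ∂(Measure.pi fun _ : Fin N => ν)
      ≤ ENNReal.ofReal (Real.exp (C / l)) *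
        (∫⁻ x, ENNReal.ofReal (|F x| ^ (l : ℝ))
            ∂(Measure.pi fun _ : Fin N => ν.withDensity f)) ^ (((l : ℝ) - 1) / l) :=
  change_of_measure_holder_general ν f hf hprob N F hF l hl C hC hmom
end
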